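/- arXiv:2201.06859 — 7 statements merged into one kernel-verified Lean document; each statement's English description precedes it below -/
import Mathlib

section
/- Let $c_2 : \Omega \times \Omega \to (0,\infty]$ be symmetric and satisfy the triangle-type inequality $1/c_2(x,y) \le Z(1/c_2(x,z) + 1/c_2(z,y))$ for all $x,y,z$ and some constant $Z > 0$. Suppose $N, K \ge 1$ and points $x_1,\dots,x_N, y_1,\dots,y_K \in \Omega$ satisfy, for every $i \in \{1,\dots,N\}$, the inequality $\sum_{j \ne i} c_2(x_i, x_j) \le \sum_{k=1}^K c_2(x_i, y_k)$, with all quantities finite. Then $N \le (2Z+1)K$. -/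
open Finset

/-- Weighted combinatorial core ("balanced clustering" inequality): for row-stochastic
`p` and any symmetric `m` dominating all the column-wise minima,
`(∑ w)² ≤ K * ∑ᵢⱼ wᵢ wⱼ m i j`.  Proved by induction on the support of `w`,
removing for each colour `k` an `ε`-amount of mass from a point maximising `p · k`. -/
lemma lieb_comb_aux {N K : ℕ} (hK : 0 < K) (p : Fin N → Fin K → ℝ)
    (hp1 : ∀ i, ∑ k, p i k = 1) (m : Fin N → Fin N → ℝ)
    (hms : ∀ i j, m i j = m j i)
    (hmg : ∀ i j k, min (p i k) (p j k) ≤ m i j) :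
    ∀ (n : ℕ) (w : Fin N → ℝ), (∀ i, 0 ≤ w i) →
      ((univ.filter (fun i => 0 < w i)).card ≤ n) →
      (∑ i, w i) ^ 2 ≤ K * ∑ i, ∑ j, w i * w j * m i j := by
  haveI : Nonempty (Fin K) := ⟨⟨0, hK⟩⟩
  intro n
  induction n with
  | zero =>
    intro w hw hcard
    have hz : ∀ i, w i = 0 := by
      intro i
      by_contra h
      have h1 : 0 < w i := lt_of_le_of_ne (hw i) (Ne.symm h)
      have h2 : i ∈ univ.filter (fun i => 0 < w i) := by simp [h1]
      have h3 := Finset.card_pos.mpr ⟨i, h2⟩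
      omega
    simp [hz]
  | succ n IH =>
    intro w hw hcard
    by_cases hc : (univ.filter (fun i => 0 < w i)).card ≤ n
    · exact IH w hw hc
    push_neg at hc
    have hScard : (univ.filter (fun i => 0 < w i)).card = n + 1 := le_antisymm hcard hc
    have hSne : (univ.filter (fun i => 0 < w i)).Nonempty :=
      Finset.card_pos.mp (by omega)
    -- choose, for each colour, a point of positive weight maximising that column
    have hgex : ∀ k : Fin K, ∃ i, i ∈ univ.filter (fun i => 0 < w i) ∧
        ∀ j ∈ univ.filter (fun i => 0 < w i), p j k ≤ p i k := by
      intro k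
      obtain ⟨i, hi, h⟩ := (univ.filter (fun i => 0 < w i)).exists_max_image
        (fun i => p i k) hSne
      exact ⟨i, hi, h⟩
    choose g hgS hgmax using hgex
    have hgw : ∀ k, 0 < w (g k) := fun k => (Finset.mem_filter.mp (hgS k)).2
    -- multiplicities
    set ρ : Fin N → ℝ := fun i => ((univ.filter fun k => g k = i).card : ℝ) with hρdef
    have hρ0 : ∀ i, 0 ≤ ρ i := fun i => Nat.cast_nonneg _
    have hρ_notim : ∀ i, i ∉ univ.image g → ρ i = 0 := by
      intro i hi
      have he : (univ.filter fun k => g k = i) = ∅ := by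
        apply Finset.filter_eq_empty_iff.mpr
        intro k _ h
        exact hi (Finset.mem_image.mpr ⟨k, Finset.mem_univ k, h⟩)
      simp [hρdef, he]
    have hρpos : ∀ P ∈ univ.image g, 0 < ρ P := by
      intro P hP
      obtain ⟨k, _, hk⟩ := Finset.mem_image.mp hP
      have : k ∈ univ.filter fun k => g k = P := by simp [hk]
      have hcp := Finset.card_pos.mpr ⟨k, this⟩
      simp only [hρdef]
      exact_mod_cast hcp
    -- grouping identities
    have SUB : ∀ f : Fin N → ℝ, ∑ P ∈ univ.image g, ρ P * f P = ∑ i, ρ i * f i := by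
      intro f
      apply Finset.sum_subset (Finset.subset_univ _)
      intro i _ hi
      rw [hρ_notim i hi, zero_mul]
    have GCOMP : ∀ f : Fin N → ℝ, ∑ i, ρ i * f i = ∑ k, f (g k) := by
      intro f
      rw [Finset.sum_comp f g]
      rw [← SUB f]
      apply Finset.sum_congr rfl
      intro b _
      rw [nsmul_eq_mul]
    have hsumρ : ∑ i, ρ i = (K : ℝ) := by
      have h := GCOMP (fun _ => 1)
      simpa using h
    -- the point to be exhausted
    have hONe : (univ.image g).Nonempty := (Finset.univ_nonempty).image g
    obtain ⟨P₀, hP₀O, hP₀min⟩ :=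
      Finset.exists_min_image (univ.image g) (fun P => w P / ρ P) hONe
    have hOS : ∀ P ∈ univ.image g, 0 < w P := by
      intro P hP
      obtain ⟨k, _, hk⟩ := Finset.mem_image.mp hP
      exact hk ▸ hgw k
    set ε := w P₀ / ρ P₀ with hεdef
    have hε0 : 0 < ε := div_pos (hOS P₀ hP₀O) (hρpos P₀ hP₀O)
    have hδO : ∀ P ∈ univ.image g, ε * ρ P ≤ w P := by
      intro P hP
      have h1 : ε ≤ w P / ρ P := hP₀min P hP
      have h2 : 0 < ρ P := hρpos P hP
      calc ε * ρ P ≤ (w P / ρ P) * ρ P := mul_le_mul_of_nonneg_right h1 h2.le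
        _ = w P := div_mul_cancel₀ _ (ne_of_gt h2)
    have hδ : ∀ i, ε * ρ i ≤ w i := by
      intro i
      by_cases hi : i ∈ univ.image g
      · exact hδO i hi
      · rw [hρ_notim i hi, mul_zero]; exact hw i
    have hP₀z : w P₀ - ε * ρ P₀ = 0 := by
      rw [hεdef, div_mul_cancel₀ _ (ne_of_gt (hρpos P₀ hP₀O)), sub_self]
    -- support decreases
    have hw' : ∀ i, 0 ≤ w i - ε * ρ i := fun i => sub_nonneg.mpr (hδ i)
    have hsub : (univ.filter fun i => 0 < w i - ε * ρ i) ⊆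
        (univ.filter fun i => 0 < w i).erase P₀ := by
      intro i hi
      simp only [Finset.mem_filter] at hi
      have hwi' : 0 < w i - ε * ρ i := hi.2
      have hwi : 0 < w i :=
        lt_of_lt_of_le hwi' (sub_le_self _ (mul_nonneg hε0.le (hρ0 i)))
      have hne : i ≠ P₀ := by
        intro h
        rw [h, hP₀z] at hwi'
        exact lt_irrefl 0 hwi'
      exact Finset.mem_erase.mpr ⟨hne, Finset.mem_filter.mpr ⟨Finset.mem_univ i, hwi⟩⟩
    have hcard' : (univ.filter fun i => 0 < w i - ε * ρ i).card ≤ n := by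
      have h1 := Finset.card_le_card hsub
      have h2 : ((univ.filter fun i => 0 < w i).erase P₀).card = n := by
        rw [Finset.card_erase_of_mem, hScard]
        · simp
        · exact Finset.mem_filter.mpr ⟨Finset.mem_univ _, hOS P₀ hP₀O⟩
      omega
    have IH' := IH (fun i => w i - ε * ρ i) hw' hcard'
    -- abbreviations
    set W := ∑ i, w i with hWdef
    set T := ∑ k, ∑ j, w j * m (g k) j with hTdef
    set Bq := ∑ k, ∑ l, m (g k) (g l) with hBdef
    have hW' : ∑ i, (w i - ε * ρ i) = W - ε * K := by
      rw [Finset.sum_sub_distrib, ← Finset.mul_sum, hsumρ]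
    -- identity: F w' = F w - 2εT + ε²Bq
    have h1 : ∑ i, ∑ j, ρ i * (w j * m i j) = T := by
      calc ∑ i, ∑ j, ρ i * (w j * m i j) = ∑ i, ρ i * ∑ j, w j * m i j := by
            refine Finset.sum_congr rfl fun i _ => ?_
            rw [Finset.mul_sum]
        _ = T := GCOMP (fun i => ∑ j, w j * m i j)
    have hinner : ∀ i : Fin N, ∑ j, ρ j * m i j = ∑ l, m i (g l) :=
      fun i => GCOMP (fun j => m i j)
    have h2 : ∑ i, ∑ j, w i * (ρ j * m i j) = T := by
      calc ∑ i, ∑ j, w i * (ρ j * m i j) = ∑ i, w i * ∑ j, ρ j * m i j := by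
            refine Finset.sum_congr rfl fun i _ => ?_
            rw [Finset.mul_sum]
        _ = ∑ i, ∑ l, w i * m i (g l) := by
            refine Finset.sum_congr rfl fun i _ => ?_
            rw [hinner i, Finset.mul_sum]
        _ = ∑ l, ∑ i, w i * m i (g l) := Finset.sum_comm
        _ = ∑ l, ∑ i, w i * m (g l) i := by
            refine Finset.sum_congr rfl fun l _ => Finset.sum_congr rfl fun i _ => ?_
            rw [hms]
        _ = T := rfl
    have h3 : ∑ i, ∑ j, ρ i * (ρ j * m i j) = Bq := by
      calc ∑ i, ∑ j, ρ i * (ρ j * m i j) = ∑ i, ρ i * ∑ j, ρ j * m i j := by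
            refine Finset.sum_congr rfl fun i _ => ?_
            rw [Finset.mul_sum]
        _ = ∑ i, ρ i * ∑ l, m i (g l) := by
            refine Finset.sum_congr rfl fun i _ => ?_
            rw [hinner i]
        _ = Bq := GCOMP (fun i => ∑ l, m i (g l))
    have ID1 : ∑ i, ∑ j, (w i - ε * ρ i) * (w j - ε * ρ j) * m i j
        = (∑ i, ∑ j, w i * w j * m i j) - 2 * ε * T + ε ^ 2 * Bq := by
      have expand : ∀ i j : Fin N, (w i - ε * ρ i) * (w j - ε * ρ j) * m i j
          = w i * w j * m i j - ε * (ρ i * (w j * m i j)) - ε * (w i * (ρ j * m i j))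
            + ε ^ 2 * (ρ i * (ρ j * m i j)) := by
        intro i j; ring
      calc ∑ i, ∑ j, (w i - ε * ρ i) * (w j - ε * ρ j) * m i j
          = ∑ i, ∑ j, (w i * w j * m i j - ε * (ρ i * (w j * m i j))
              - ε * (w i * (ρ j * m i j)) + ε ^ 2 * (ρ i * (ρ j * m i j))) := by
            exact Finset.sum_congr rfl fun i _ => Finset.sum_congr rfl fun j _ => expand i j
        _ = (∑ i, ∑ j, w i * w j * m i j) - ε * (∑ i, ∑ j, ρ i * (w j * m i j))
            - ε * (∑ i, ∑ j, w i * (ρ j * m i j))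
            + ε ^ 2 * (∑ i, ∑ j, ρ i * (ρ j * m i j)) := by
            simp only [Finset.sum_sub_distrib, Finset.sum_add_distrib, ← Finset.mul_sum]
        _ = (∑ i, ∑ j, w i * w j * m i j) - 2 * ε * T + ε ^ 2 * Bq := by
            rw [h1, h2, h3]; ring
    -- the key inequality 2(T - W) ≥ ε (Bq - K)
    set E : Fin N → ℝ := fun P => ∑ k, (m (g k) P - p P k) with hEdef
    have hmp : ∀ (k : Fin K) (j : Fin N), 0 < w j → p j k ≤ m (g k) j := by
      intro k j hj
      have hjS : j ∈ univ.filter fun i => 0 < w i :=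
        Finset.mem_filter.mpr ⟨Finset.mem_univ j, hj⟩
      have h := hgmax k j hjS
      have := hmg (g k) j k
      rwa [min_eq_right h] at this
    have hE0 : ∀ j, 0 < w j → 0 ≤ E j := by
      intro j hj
      apply Finset.sum_nonneg
      intro k _
      exact sub_nonneg.mpr (hmp k j hj)
    have hwE0 : ∀ j, 0 ≤ w j * E j := by
      intro j
      rcases eq_or_lt_of_le (hw j) with h | h
      · rw [← h, zero_mul]
      · exact mul_nonneg (hw j) (hE0 j h)
    have hW_eq : W = ∑ k, ∑ j, w j * p j k := by
      calc W = ∑ j, w j * ∑ k, p j k := by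
            rw [hWdef]
            refine Finset.sum_congr rfl fun j _ => ?_
            rw [hp1 j, mul_one]
        _ = ∑ j, ∑ k, w j * p j k := by
            refine Finset.sum_congr rfl fun j _ => ?_
            rw [Finset.mul_sum]
        _ = ∑ k, ∑ j, w j * p j k := Finset.sum_comm
    have hTW : T - W = ∑ j, w j * E j := by
      calc T - W = ∑ k, ∑ j, (w j * m (g k) j - w j * p j k) := by
            rw [hW_eq, hTdef, ← Finset.sum_sub_distrib]
            refine Finset.sum_congr rfl fun k _ => ?_
            rw [← Finset.sum_sub_distrib]
        _ = ∑ j, ∑ k, (w j * m (g k) j - w j * p j k) := Finset.sum_comm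
        _ = ∑ j, w j * E j := by
            refine Finset.sum_congr rfl fun j _ => ?_
            rw [hEdef]
            simp only
            rw [Finset.mul_sum]
            refine Finset.sum_congr rfl fun k _ => ?_
            ring
    have hTW0 : 0 ≤ T - W := by
      rw [hTW]
      exact Finset.sum_nonneg fun j _ => hwE0 j
    have hTWO : ∑ P ∈ univ.image g, w P * E P ≤ T - W := by
      rw [hTW]
      exact Finset.sum_le_sum_of_subset_of_nonneg (Finset.subset_univ _)
        (fun i _ _ => hwE0 i)
    have hBK : Bq - K = ∑ P ∈ univ.image g, ρ P * E P := by
      have hEg : ∀ l, E (g l) = (∑ k, m (g k) (g l)) - 1 := by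
        intro l
        rw [hEdef]
        simp only
        rw [Finset.sum_sub_distrib, hp1]
      calc Bq - K = (∑ l, ∑ k, m (g k) (g l)) - (K : ℝ) := by rw [hBdef, Finset.sum_comm]
        _ = ∑ l, ((∑ k, m (g k) (g l)) - 1) := by
            rw [Finset.sum_sub_distrib]
            simp
        _ = ∑ l, E (g l) := by
            exact Finset.sum_congr rfl fun l _ => (hEg l).symm
        _ = ∑ i, ρ i * E i := (GCOMP E).symm
        _ = ∑ P ∈ univ.image g, ρ P * E P := (SUB E).symm
    have hεB : ε * (Bq - K) ≤ T - W := by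
      rw [hBK, Finset.mul_sum]
      calc ∑ P ∈ univ.image g, ε * (ρ P * E P) ≤ ∑ P ∈ univ.image g, w P * E P := by
            apply Finset.sum_le_sum
            intro P hP
            have h1 := hδO P hP
            have hEP : 0 ≤ E P := hE0 P (hOS P hP)
            calc ε * (ρ P * E P) = (ε * ρ P) * E P := by ring
              _ ≤ w P * E P := mul_le_mul_of_nonneg_right h1 hEP
        _ ≤ T - W := hTWO
    -- conclude
    have hKR : (0 : ℝ) < K := by exact_mod_cast hK
    rw [hW'] at IH'
    rw [ID1] at IH'
    have key : 0 ≤ 2 * ε * (K : ℝ) * (T - W) - ε ^ 2 * (K : ℝ) * (Bq - K) := by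
      have h1 : ε * (K : ℝ) * (ε * (Bq - K)) ≤ ε * (K : ℝ) * (T - W) :=
        mul_le_mul_of_nonneg_left hεB (by positivity)
      nlinarith [mul_nonneg (mul_nonneg hε0.le hKR.le) hTW0]
    set F := ∑ i, ∑ j, w i * w j * m i j with hFdef
    clear_value F W T Bq
    show W ^ 2 ≤ (K : ℝ) * F
    have e1 : W ^ 2 = (W - ε * K) ^ 2 + (2 * ε * (K : ℝ) * W - ε ^ 2 * (K : ℝ) ^ 2) := by
      ring
    have e2 : (K : ℝ) * (F - 2 * ε * T + ε ^ 2 * Bq)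
        = (K : ℝ) * F - 2 * ε * (K : ℝ) * W + ε ^ 2 * (K : ℝ) ^ 2
          - (2 * ε * (K : ℝ) * (T - W) - ε ^ 2 * (K : ℝ) * (Bq - K)) := by
      ring
    linarith [IH', key]

/-- Lieb-type ionization bound: if `1/c₂` satisfies a triangle-type inequality with
constant `Z` and each `xᵢ` is bound to the `y` configuration, then `N ≤ (2Z+1)K`. -/
theorem stmt1 {Ω : Type*} (c2 : Ω → Ω → ℝ) (Z : ℝ) (hZ : 0 < Z)
    (hpos : ∀ x y, 0 < c2 x y) (hsym : ∀ x y, c2 x y = c2 y x)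
    (htri : ∀ x y z, 1 / c2 x y ≤ Z * (1 / c2 x z + 1 / c2 z y))
    (N K : ℕ) (hN : 1 ≤ N) (hK : 1 ≤ K) (x : Fin N → Ω) (y : Fin K → Ω)
    (hbind : ∀ i : Fin N,
      ∑ j ∈ Finset.univ.erase i, c2 (x i) (x j) ≤ ∑ k : Fin K, c2 (x i) (y k)) :
    (N : ℝ) ≤ (2 * Z + 1) * K := by
  have hK0 : 0 < K := hK
  have hN0 : 0 < N := hN
  haveI : Nonempty (Fin K) := ⟨⟨0, hK0⟩⟩
  set R : Fin N → ℝ := fun i => ∑ k, c2 (x i) (y k) with hRdef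
  have hR0 : ∀ i, 0 < R i := by
    intro i
    rw [hRdef]
    exact Finset.sum_pos (fun k _ => hpos _ _) Finset.univ_nonempty
  have hbind' : ∀ i, ∑ j ∈ Finset.univ.erase i, c2 (x i) (x j) ≤ R i := by
    intro i
    rw [hRdef]
    exact hbind i
  set p : Fin N → Fin K → ℝ := fun i k => c2 (x i) (y k) / R i with hpdef
  have hp1 : ∀ i, ∑ k, p i k = 1 := by
    intro i
    have hri : (∑ k, c2 (x i) (y k)) = R i := rfl
    show (∑ k, c2 (x i) (y k) / R i) = 1
    rw [← Finset.sum_div, hri]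
    exact div_self (ne_of_gt (hR0 i))
  have hne : (univ : Finset (Fin K)).Nonempty := Finset.univ_nonempty
  set m : Fin N → Fin N → ℝ :=
    fun i j => univ.sup' hne (fun k => min (p i k) (p j k)) with hmdef
  have hms : ∀ i j, m i j = m j i := by
    intro i j
    show (univ.sup' hne fun k => min (p i k) (p j k))
        = univ.sup' hne fun k => min (p j k) (p i k)
    exact Finset.sup'_congr hne rfl (fun k _ => min_comm _ _)
  have hmg : ∀ i j k, min (p i k) (p j k) ≤ m i j := by
    intro i j k
    show min (p i k) (p j k) ≤ univ.sup' hne fun k => min (p i k) (p j k)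
    exact Finset.le_sup' (fun k => min (p i k) (p j k)) (Finset.mem_univ k)
  -- lower bound from the combinatorial lemma (weights all one)
  have hcomb := lieb_comb_aux hK0 p hp1 m hms hmg N (fun _ => 1)
      (fun _ => zero_le_one)
      (le_trans (Finset.card_filter_le _ _) (by simp))
  have hlow : (N : ℝ) ^ 2 ≤ K * ∑ i, ∑ j, m i j := by
    simpa using hcomb
  -- diagonal bound
  have hmii : ∀ i, m i i ≤ 1 := by
    intro i
    show (univ.sup' hne fun k => min (p i k) (p i k)) ≤ 1
    apply Finset.sup'_le
    intro k _
    rw [min_self]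
    show c2 (x i) (y k) / R i ≤ 1
    rw [div_le_one (hR0 i)]
    have hri : (∑ k, c2 (x i) (y k)) = R i := rfl
    rw [← hri]
    exact Finset.single_le_sum (fun k _ => (hpos _ _).le) (Finset.mem_univ k)
  -- off-diagonal pair bound
  have key1 : ∀ i j, m i j ≤ Z * c2 (x i) (x j) * (1 / R i + 1 / R j) := by
    intro i j
    show (univ.sup' hne fun k => min (p i k) (p j k))
        ≤ Z * c2 (x i) (x j) * (1 / R i + 1 / R j)
    apply Finset.sup'_le
    intro k _
    have hai : 0 < c2 (x i) (y k) := hpos _ _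
    have haj : 0 < c2 (x j) (y k) := hpos _ _
    have hc : 0 < c2 (x i) (x j) := hpos _ _
    have htr : 1 / c2 (x i) (x j)
        ≤ Z * (1 / c2 (x i) (y k) + 1 / c2 (x j) (y k)) := by
      have h := htri (x i) (x j) (y k)
      rwa [hsym (y k) (x j)] at h
    set ai := c2 (x i) (y k) with haidef
    set aj := c2 (x j) (y k) with hajdef
    set c := c2 (x i) (x j) with hcdef
    have hai' : ai ≠ 0 := ne_of_gt hai
    have haj' : aj ≠ 0 := ne_of_gt haj
    have hc' : c ≠ 0 := ne_of_gt hc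
    have h1 : ai * aj ≤ Z * c * (ai + aj) := by
      have h2 : (1 / c) * (c * ai * aj) ≤ (Z * (1 / ai + 1 / aj)) * (c * ai * aj) :=
        mul_le_mul_of_nonneg_right htr
          (mul_nonneg (mul_nonneg hc.le hai.le) haj.le)
      have h3 : (1 / c) * (c * ai * aj) = ai * aj := by
        field_simp
      have h4 : (Z * (1 / ai + 1 / aj)) * (c * ai * aj) = Z * c * (ai + aj) := by
        field_simp
        ring
      rw [h3, h4] at h2
      exact h2
    have hpik : p i k = ai / R i := rfl
    have hpjk : p j k = aj / R j := rfl
    have h3 : min (p i k) (p j k) * (ai + aj) ≤ ai * aj * (1 / R i + 1 / R j) := by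
      have e1 : ai * aj * (1 / R i + 1 / R j) = (aj / R j) * ai + (ai / R i) * aj := by
        field_simp [ne_of_gt (hR0 i), ne_of_gt (hR0 j)]
        ring
      rw [e1]
      have t1 : min (p i k) (p j k) * ai ≤ (aj / R j) * ai := by
        apply mul_le_mul_of_nonneg_right _ hai.le
        rw [← hpjk]
        exact min_le_right _ _
      have t2 : min (p i k) (p j k) * aj ≤ (ai / R i) * aj := by
        apply mul_le_mul_of_nonneg_right _ haj.le
        rw [← hpik]
        exact min_le_left _ _
      calc min (p i k) (p j k) * (ai + aj)
          = min (p i k) (p j k) * ai + min (p i k) (p j k) * aj := by ring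
        _ ≤ (aj / R j) * ai + (ai / R i) * aj := add_le_add t1 t2
    have h4 : ai * aj * (1 / R i + 1 / R j) ≤ Z * c * (ai + aj) * (1 / R i + 1 / R j) :=
      mul_le_mul_of_nonneg_right h1
        (add_nonneg (one_div_nonneg.mpr (hR0 i).le) (one_div_nonneg.mpr (hR0 j).le))
    have h5 : min (p i k) (p j k) * (ai + aj)
        ≤ (Z * c * (1 / R i + 1 / R j)) * (ai + aj) := by
      calc min (p i k) (p j k) * (ai + aj) ≤ ai * aj * (1 / R i + 1 / R j) := h3
        _ ≤ Z * c * (ai + aj) * (1 / R i + 1 / R j) := h4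
        _ = (Z * c * (1 / R i + 1 / R j)) * (ai + aj) := by ring
    exact le_of_mul_le_mul_right h5 (add_pos hai haj)
  -- swap lemma for off-diagonal double sums
  have swap_lemma : ∀ f : Fin N → Fin N → ℝ,
      ∑ i, ∑ j ∈ univ.erase i, f i j = ∑ j, ∑ i ∈ univ.erase j, f i j := by
    intro f
    have h1 : ∀ i : Fin N, ∑ j ∈ univ.erase i, f i j = (∑ j, f i j) - f i i :=
      fun i => Finset.sum_erase_eq_sub (Finset.mem_univ i)
    have h2 : ∀ j : Fin N, ∑ i ∈ univ.erase j, f i j = (∑ i, f i j) - f j j :=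
      fun j => Finset.sum_erase_eq_sub (Finset.mem_univ j)
    simp only [h1, h2]
    rw [Finset.sum_sub_distrib, Finset.sum_sub_distrib, Finset.sum_comm]
  -- binding bounds
  have hA : ∑ i, (1 / R i) * ∑ j ∈ univ.erase i, c2 (x i) (x j) ≤ (N : ℝ) := by
    calc ∑ i, (1 / R i) * ∑ j ∈ univ.erase i, c2 (x i) (x j)
        ≤ ∑ i : Fin N, (1 : ℝ) := by
          apply Finset.sum_le_sum
          intro i _
          calc (1 / R i) * ∑ j ∈ univ.erase i, c2 (x i) (x j)
              ≤ (1 / R i) * R i :=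
                mul_le_mul_of_nonneg_left (hbind' i) (one_div_nonneg.mpr (hR0 i).le)
            _ = 1 := one_div_mul_cancel (ne_of_gt (hR0 i))
      _ = (N : ℝ) := by simp
  -- upper bound for the full double sum of m
  have hup : ∑ i, ∑ j, m i j ≤ (N : ℝ) + 2 * Z * N := by
    have step1 : ∀ i, ∑ j, m i j
        ≤ 1 + ∑ j ∈ univ.erase i, Z * c2 (x i) (x j) * (1 / R i + 1 / R j) := by
      intro i
      have hsplit : ∑ j, m i j = m i i + ∑ j ∈ univ.erase i, m i j :=
        (Finset.add_sum_erase _ _ (Finset.mem_univ i)).symm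
      rw [hsplit]
      exact add_le_add (hmii i) (Finset.sum_le_sum fun j _ => key1 i j)
    have hBsum : ∑ i, ∑ j ∈ univ.erase i, Z * c2 (x i) (x j) * (1 / R i + 1 / R j)
        ≤ 2 * Z * N := by
      have hsplit2 : ∀ i, ∑ j ∈ univ.erase i, Z * c2 (x i) (x j) * (1 / R i + 1 / R j)
          = (∑ j ∈ univ.erase i, Z * (c2 (x i) (x j) * (1 / R i)))
            + ∑ j ∈ univ.erase i, Z * (c2 (x i) (x j) * (1 / R j)) := by
        intro i
        rw [← Finset.sum_add_distrib]
        refine Finset.sum_congr rfl fun j _ => ?_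
        ring
      have hA1 : ∑ i, ∑ j ∈ univ.erase i, Z * (c2 (x i) (x j) * (1 / R i)) ≤ Z * N := by
        calc ∑ i, ∑ j ∈ univ.erase i, Z * (c2 (x i) (x j) * (1 / R i))
            = Z * ∑ i, (1 / R i) * ∑ j ∈ univ.erase i, c2 (x i) (x j) := by
              rw [Finset.mul_sum]
              refine Finset.sum_congr rfl fun i _ => ?_
              rw [Finset.mul_sum, Finset.mul_sum]
              refine Finset.sum_congr rfl fun j _ => ?_
              ring
          _ ≤ Z * N := mul_le_mul_of_nonneg_left hA hZ.le
      have hA2 : ∑ i, ∑ j ∈ univ.erase i, Z * (c2 (x i) (x j) * (1 / R j)) ≤ Z * N := by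
        rw [swap_lemma (fun i j => Z * (c2 (x i) (x j) * (1 / R j)))]
        calc ∑ j, ∑ i ∈ univ.erase j, Z * (c2 (x i) (x j) * (1 / R j))
            = Z * ∑ j, (1 / R j) * ∑ i ∈ univ.erase j, c2 (x j) (x i) := by
              rw [Finset.mul_sum]
              refine Finset.sum_congr rfl fun j _ => ?_
              rw [Finset.mul_sum, Finset.mul_sum]
              refine Finset.sum_congr rfl fun i _ => ?_
              rw [hsym (x i) (x j)]
              ring
          _ ≤ Z * N := mul_le_mul_of_nonneg_left hA hZ.le
      calc ∑ i, ∑ j ∈ univ.erase i, Z * c2 (x i) (x j) * (1 / R i + 1 / R j)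
          = (∑ i, ∑ j ∈ univ.erase i, Z * (c2 (x i) (x j) * (1 / R i)))
            + ∑ i, ∑ j ∈ univ.erase i, Z * (c2 (x i) (x j) * (1 / R j)) := by
            rw [← Finset.sum_add_distrib]
            exact Finset.sum_congr rfl fun i _ => hsplit2 i
        _ ≤ Z * N + Z * N := add_le_add hA1 hA2
        _ = 2 * Z * N := by ring
    calc ∑ i, ∑ j, m i j
        ≤ ∑ i, (1 + ∑ j ∈ univ.erase i, Z * c2 (x i) (x j) * (1 / R i + 1 / R j)) :=
          Finset.sum_le_sum fun i _ => step1 i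
      _ = (N : ℝ) + ∑ i, ∑ j ∈ univ.erase i, Z * c2 (x i) (x j) * (1 / R i + 1 / R j) := by
          rw [Finset.sum_add_distrib]
          simp
      _ ≤ (N : ℝ) + 2 * Z * N := by linarith [hBsum]
  -- conclude
  have hKR : (0 : ℝ) < K := by exact_mod_cast hK0
  have hNR : (0 : ℝ) < N := by exact_mod_cast hN0
  have hfinal : (N : ℝ) * N ≤ ((2 * Z + 1) * K) * N := by
    have h1 : (N : ℝ) ^ 2 ≤ K * ((N : ℝ) + 2 * Z * N) :=
      le_trans hlow (mul_le_mul_of_nonneg_left hup hKR.le)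
    nlinarith [h1]
  exact le_of_mul_le_mul_right hfinal hNR
end

section
/- Let $N, K \ge 1$ and $x_1,\dots,x_N, y_1,\dots,y_K \in \mathbb{R}^d$ be points such that for every subset $I \subseteq \{1,\dots,N\}$ and $J \subseteq \{1,\dots,K\}$, the Coulomb cost exchange inequality holds: $\sum_{i \in I}\sum_{k \in J^c} \frac{1}{|x_i - y_k|} + \sum_{i \in I^c}\sum_{k \in J} \frac{1}{|x_i - y_k|} \ge \sum_{i \in I}\sum_{j \in I^c} \frac{1}{|x_i - x_j|} + \sum_{k \in J}\sum_{\ell \in J^c} \frac{1}{|y_k - y_\ell|}$ (all points distinct where needed so that all terms are finite). Then $(N - K)^2 \le N + K$. -/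
/-!
Cut both point families by the half-space `{z | t ≤ ⟪z, g⟫}`. Integrating the exchange
inequality over the threshold `t ∈ ℝ` turns the indicator that `t` separates `z` from `w` into
`(⟪z - w, g⟫)₊`. Averaging over `g` against the standard Gaussian, `𝔼 (⟪u, g⟫)₊ = c ‖u‖` with
`c > 0`, so weights `A, B, W` satisfying the exchange inequality satisfy
`∑ ‖xᵢ - xⱼ‖ Aᵢⱼ + ∑ ‖yₖ - yₗ‖ Bₖₗ ≤ 2 ∑ ‖xᵢ - yₖ‖ Wᵢₖ`. For Coulomb weights every term is `1`,
which reads `N (N - 1) + K (K - 1) ≤ 2 N K`.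
-/

open Finset MeasureTheory ProbabilityTheory
open scoped RealInnerProductSpace

section Thresholds

variable {ι κ : Type*} [Fintype ι] [Fintype κ] [DecidableEq κ]

noncomputable def cutSum (a : ι → ℝ) (b : κ → ℝ) (w : ι → κ → ℝ) (t : ℝ) : ℝ :=
  ∑ i ∈ {i | t ≤ a i}, ∑ k ∈ ({k | t ≤ b k} : Finset κ)ᶜ, w i k

lemma cutSum_eq_sum_indicator (a : ι → ℝ) (b : κ → ℝ) (w : ι → κ → ℝ) (t : ℝ) :
    cutSum a b w t = ∑ i, ∑ k, (Set.Ioc (b k) (a i)).indicator (fun _ => w i k) t := by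
  rw [cutSum, sum_filter]
  refine sum_congr rfl fun i _ => ?_
  rw [compl_filter, sum_filter]
  split_ifs with hi
  · refine sum_congr rfl fun k _ => ?_
    by_cases hk : t ≤ b k <;> simp [Set.indicator_apply, hi, hk]
  · refine (sum_eq_zero fun k _ => ?_).symm
    simp [hi]

lemma integrable_indicator_Ioc_const (a b c : ℝ) :
    Integrable ((Set.Ioc a b).indicator fun _ => c) :=
  (integrableOn_const measure_Ioc_lt_top.ne).integrable_indicator measurableSet_Ioc

lemma integrable_cutSum (a : ι → ℝ) (b : κ → ℝ) (w : ι → κ → ℝ) :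
    Integrable (cutSum a b w) := by
  simp_rw [funext (cutSum_eq_sum_indicator a b w)]
  exact integrable_finsetSum _ fun i _ => integrable_finsetSum _ fun k _ =>
    integrable_indicator_Ioc_const _ _ _

lemma integral_cutSum (a : ι → ℝ) (b : κ → ℝ) (w : ι → κ → ℝ) :
    ∫ t, cutSum a b w t = ∑ i, ∑ k, max (a i - b k) 0 * w i k := by
  simp_rw [cutSum_eq_sum_indicator]
  rw [integral_finsetSum _ fun i _ => integrable_finsetSum _ fun k _ =>
    integrable_indicator_Ioc_const _ _ _]
  refine sum_congr rfl fun i _ => ?_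
  rw [integral_finsetSum _ fun k _ => integrable_indicator_Ioc_const _ _ _]
  refine sum_congr rfl fun k _ => ?_
  rw [integral_indicator_const _ measurableSet_Ioc, Real.volume_real_Ioc, smul_eq_mul]

end Thresholds

section Exchange

variable {ι κ : Type*} [Fintype ι] [Fintype κ] [DecidableEq ι] [DecidableEq κ]

def ExchangeInequality (A : ι → ι → ℝ) (B : κ → κ → ℝ) (W : ι → κ → ℝ) : Prop :=
  ∀ (I : Finset ι) (J : Finset κ),
    ∑ i ∈ I, ∑ j ∈ Iᶜ, A i j + ∑ k ∈ J, ∑ l ∈ Jᶜ, B k l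
      ≤ ∑ i ∈ I, ∑ k ∈ Jᶜ, W i k + ∑ i ∈ Iᶜ, ∑ k ∈ J, W i k

variable {A : ι → ι → ℝ} {B : κ → κ → ℝ} {W : ι → κ → ℝ}

theorem ExchangeInequality.sum_posPart_sub_le (h : ExchangeInequality A B W)
    (a : ι → ℝ) (b : κ → ℝ) :
    ∑ i, ∑ j, max (a i - a j) 0 * A i j + ∑ k, ∑ l, max (b k - b l) 0 * B k l
      ≤ ∑ i, ∑ k, max (a i - b k) 0 * W i k + ∑ k, ∑ i, max (b k - a i) 0 * W i k := by
  have hcut (t : ℝ) :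
      cutSum a a A t + cutSum b b B t ≤ cutSum a b W t + cutSum b a (fun k i => W i k) t := by
    unfold cutSum
    rw [sum_comm (s := ({k | t ≤ b k} : Finset κ)) (t := ({i | t ≤ a i} : Finset ι)ᶜ)]
    exact h _ _
  calc _ = ∫ t, cutSum a a A t + cutSum b b B t := by
        rw [integral_add (integrable_cutSum _ _ _) (integrable_cutSum _ _ _),
          integral_cutSum, integral_cutSum]
    _ ≤ ∫ t, cutSum a b W t + cutSum b a (fun k i => W i k) t :=
        integral_mono ((integrable_cutSum _ _ _).add (integrable_cutSum _ _ _))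
          ((integrable_cutSum _ _ _).add (integrable_cutSum _ _ _)) hcut
    _ = _ := by
        rw [integral_add (integrable_cutSum _ _ _) (integrable_cutSum _ _ _),
          integral_cutSum, integral_cutSum]

end Exchange

section Gaussian

variable {E : Type*} [NormedAddCommGroup E] [InnerProductSpace ℝ E] [FiniteDimensional ℝ E]
  [MeasurableSpace E] [BorelSpace E] {ι κ : Type*} [Fintype ι] [Fintype κ]

lemma integrable_max_inner_zero_stdGaussian (u : E) :
    Integrable (fun g => max ⟪u, g⟫ 0) (stdGaussian E) :=
  (IsGaussian.integrable_dual _ (innerSL ℝ u)).pos_part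

lemma integral_posPart_gaussianReal_pos : 0 < ∫ s, max s 0 ∂gaussianReal 0 1 := by
  have hint : Integrable (fun s : ℝ => max s 0) (gaussianReal 0 1) :=
    (IsGaussian.integrable_dual _ (ContinuousLinearMap.id ℝ ℝ)).pos_part
  rw [integral_pos_iff_support_of_nonneg (fun s => le_max_right s 0) hint]
  have hsupp : Function.support (fun s : ℝ => max s 0) = Set.Ioi 0 := by
    ext s; simp [Function.mem_support]
  rw [hsupp, pos_iff_ne_zero]
  intro h
  have := gaussianReal_absolutelyContinuous' 0 one_ne_zero h
  simp at this

lemma integral_max_inner_zero_stdGaussian (u : E) :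
    ∫ g, max ⟪u, g⟫ 0 ∂stdGaussian E = ‖u‖ * ∫ s, max s 0 ∂gaussianReal 0 1 := by
  have hlaw : (stdGaussian E).map (innerSL ℝ u) = (gaussianReal 0 1).map (‖u‖ * ·) := by
    rw [IsGaussian.map_eq_gaussianReal, integral_strongDual_stdGaussian,
      variance_dual_stdGaussian, innerSL_apply_norm, gaussianReal_map_const_mul]
    congr 1
    · simp
    · ext; simp
  calc ∫ g, max ⟪u, g⟫ 0 ∂stdGaussian E
      = ∫ s, max s 0 ∂(stdGaussian E).map (innerSL ℝ u) :=
        (integral_map (f := fun s : ℝ => max s 0) (by fun_prop) (by fun_prop)).symm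
    _ = ∫ s, max (‖u‖ * s) 0 ∂gaussianReal 0 1 := by
        rw [hlaw, integral_map (f := fun s : ℝ => max s 0) (by fun_prop) (by fun_prop)]
    _ = ‖u‖ * ∫ s, max s 0 ∂gaussianReal 0 1 := by
        rw [← integral_const_mul]
        congr 1 with s
        rw [mul_max_of_nonneg _ _ (norm_nonneg u), mul_zero]

lemma integrable_sum_posPart_inner_sub_stdGaussian (p : ι → E) (q : κ → E) (w : ι → κ → ℝ) :
    Integrable (fun g => ∑ i, ∑ k, max (⟪p i, g⟫ - ⟪q k, g⟫) 0 * w i k) (stdGaussian E) := by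
  simp_rw [← inner_sub_left]
  exact integrable_finsetSum _ fun i _ => integrable_finsetSum _ fun k _ =>
    (integrable_max_inner_zero_stdGaussian _).mul_const _

lemma integral_sum_posPart_inner_sub_stdGaussian (p : ι → E) (q : κ → E) (w : ι → κ → ℝ) :
    ∫ g, ∑ i, ∑ k, max (⟪p i, g⟫ - ⟪q k, g⟫) 0 * w i k ∂stdGaussian E
      = (∫ s, max s 0 ∂gaussianReal 0 1) * ∑ i, ∑ k, ‖p i - q k‖ * w i k := by
  simp_rw [← inner_sub_left, mul_sum]
  rw [integral_finsetSum _ fun i _ => integrable_finsetSum _ fun k _ =>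
    (integrable_max_inner_zero_stdGaussian _).mul_const _]
  refine sum_congr rfl fun i _ => ?_
  rw [integral_finsetSum _ fun k _ => (integrable_max_inner_zero_stdGaussian _).mul_const _]
  refine sum_congr rfl fun k _ => ?_
  rw [integral_mul_const, integral_max_inner_zero_stdGaussian]
  ring

end Gaussian

section Averaging

variable {E : Type*} [NormedAddCommGroup E] [InnerProductSpace ℝ E] [FiniteDimensional ℝ E]
  {ι κ : Type*} [Fintype ι] [Fintype κ] [DecidableEq ι] [DecidableEq κ]
  {A : ι → ι → ℝ} {B : κ → κ → ℝ} {W : ι → κ → ℝ}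

theorem ExchangeInequality.sum_norm_sub_le (h : ExchangeInequality A B W) (p : ι → E)
    (q : κ → E) :
    ∑ i, ∑ j, ‖p i - p j‖ * A i j + ∑ k, ∑ l, ‖q k - q l‖ * B k l
      ≤ 2 * ∑ i, ∑ k, ‖p i - q k‖ * W i k := by
  let := borel E
  have : BorelSpace E := ⟨rfl⟩
  have hmono := integral_mono
    ((integrable_sum_posPart_inner_sub_stdGaussian p p A).add
      (integrable_sum_posPart_inner_sub_stdGaussian q q B))
    ((integrable_sum_posPart_inner_sub_stdGaussian p q W).add
      (integrable_sum_posPart_inner_sub_stdGaussian q p fun k i => W i k))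
    fun g => h.sum_posPart_sub_le (fun i => ⟪p i, g⟫) (fun k => ⟪q k, g⟫)
  simp only [Pi.add_apply] at hmono
  have hswap : ∑ k, ∑ i, ‖q k - p i‖ * W i k = ∑ i, ∑ k, ‖p i - q k‖ * W i k := by
    simp_rw [norm_sub_rev (q _)]
    exact sum_comm
  rw [integral_add (integrable_sum_posPart_inner_sub_stdGaussian _ _ _)
      (integrable_sum_posPart_inner_sub_stdGaussian _ _ _),
    integral_add (integrable_sum_posPart_inner_sub_stdGaussian _ _ _)
      (integrable_sum_posPart_inner_sub_stdGaussian _ _ _),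
    integral_sum_posPart_inner_sub_stdGaussian, integral_sum_posPart_inner_sub_stdGaussian,
    integral_sum_posPart_inner_sub_stdGaussian, integral_sum_posPart_inner_sub_stdGaussian,
    hswap, ← mul_add, ← mul_add, ← two_mul] at hmono
  exact le_of_mul_le_mul_left hmono integral_posPart_gaussianReal_pos

end Averaging

section Counting

variable {E : Type*} [NormedAddCommGroup E] {ι κ : Type*} [Fintype ι] [Fintype κ]

lemma norm_sub_mul_one_div_dist {u v : E} (h : u ≠ v) : ‖u - v‖ * (1 / dist u v) = 1 := by
  rw [dist_eq_norm, mul_one_div_cancel (norm_ne_zero_iff.2 (sub_ne_zero.2 h))]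

lemma sum_sum_norm_sub_mul_one_div_dist (p : ι → E) (q : κ → E) (h : ∀ i k, p i ≠ q k) :
    ∑ i, ∑ k, ‖p i - q k‖ * (1 / dist (p i) (q k)) = Fintype.card ι * Fintype.card κ := by
  simp only [norm_sub_mul_one_div_dist (h _ _), sum_const, card_univ, nsmul_eq_mul, mul_one]

lemma sum_sum_norm_sub_mul_one_div_dist_self [DecidableEq ι] (p : ι → E)
    (h : ∀ i j, i ≠ j → p i ≠ p j) :
    ∑ i, ∑ j, ‖p i - p j‖ * (1 / dist (p i) (p j))
      = Fintype.card ι * (Fintype.card ι - 1) := by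
  have hterm (i j : ι) : ‖p i - p j‖ * (1 / dist (p i) (p j)) = 1 - if i = j then 1 else 0 := by
    split_ifs with hij
    · simp [hij]
    · rw [norm_sub_mul_one_div_dist (h i j hij), sub_zero]
  simp only [hterm, sum_sub_distrib, sum_const, card_univ, sum_ite_eq, mem_univ, if_true,
    nsmul_eq_mul, mul_one, mul_sub]

end Counting

theorem stmt3_general (d N K : ℕ)
    (x : Fin N → EuclideanSpace ℝ (Fin d)) (y : Fin K → EuclideanSpace ℝ (Fin d))
    (hxx : ∀ i j, i ≠ j → x i ≠ x j) (hyy : ∀ k l, k ≠ l → y k ≠ y l)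
    (hxy : ∀ i k, x i ≠ y k)
    (hexch : ∀ (I : Finset (Fin N)) (J : Finset (Fin K)),
      ∑ i ∈ I, ∑ j ∈ Iᶜ, 1 / dist (x i) (x j) + ∑ k ∈ J, ∑ l ∈ Jᶜ, 1 / dist (y k) (y l)
        ≤ ∑ i ∈ I, ∑ k ∈ Jᶜ, 1 / dist (x i) (y k)
          + ∑ i ∈ Iᶜ, ∑ k ∈ J, 1 / dist (x i) (y k)) :
    ((N : ℝ) - K) ^ 2 ≤ N + K := by
  have h := ExchangeInequality.sum_norm_sub_le hexch x y
  rw [sum_sum_norm_sub_mul_one_div_dist_self x hxx, sum_sum_norm_sub_mul_one_div_dist_self y hyy,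
    sum_sum_norm_sub_mul_one_div_dist x y hxy, Fintype.card_fin, Fintype.card_fin] at h
  linarith

/-- Frank–Killip–Nam screening bound: if the Coulomb exchange inequality holds for all
splittings of `N` points `x` and `K` points `y` in `ℝ^d`, then `(N-K)² ≤ N+K`. -/
theorem stmt3 (d N K : ℕ) (hN : 1 ≤ N) (hK : 1 ≤ K)
    (x : Fin N → EuclideanSpace ℝ (Fin d)) (y : Fin K → EuclideanSpace ℝ (Fin d))
    (hxx : ∀ i j, i ≠ j → x i ≠ x j) (hyy : ∀ k l, k ≠ l → y k ≠ y l)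
    (hxy : ∀ i k, x i ≠ y k)
    (hexch : ∀ (I : Finset (Fin N)) (J : Finset (Fin K)),
      ∑ i ∈ I, ∑ j ∈ Iᶜ, 1 / dist (x i) (x j) + ∑ k ∈ J, ∑ l ∈ Jᶜ, 1 / dist (y k) (y l)
        ≤ ∑ i ∈ I, ∑ k ∈ Jᶜ, 1 / dist (x i) (y k)
          + ∑ i ∈ Iᶜ, ∑ k ∈ J, 1 / dist (x i) (y k)) :
    ((N : ℝ) - K) ^ 2 ≤ N + K :=
  stmt3_general d N K x y hxx hyy hxy hexch
end

section
/- Let $c_2 : \Omega \times \Omega \to [m, M]$ be symmetric with $0 < m \le M < \infty$. Suppose $N, K \ge 1$ and points $x_1,\dots,x_N, y_1,\dots,y_K \in \Omega$ satisfy, for all $N' \in \{0,\dots,N\}$ and $K' \in \{0,\dots,K\}$ and all subsets $I \subseteq \{1,\dots,N\}$ with $|I|=N'$, $J \subseteq \{1,\dots,K\}$ with $|J|=K'$, the exchange inequality $\sum_{i\in I}\sum_{k\in J} c_2(x_i,y_k) + \sum_{i\in I^c}\sum_{k\in J^c} c_2(x_i,y_k) \ge \sum_{i\in I}\sum_{j\in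 I^c} c_2(x_i,x_j) + \sum_{k\in J}\sum_{\ell\in J^c} c_2(y_k,y_\ell)$. Then $N \le \frac{M}{m} K + 1$. -/
open Finset

/-- Support bound for bounded repulsive pairwise costs: if `0 < m ≤ c₂ ≤ M` and the
exchange inequality holds for all splittings, then `N ≤ (M/m)K + 1`. -/
theorem stmt5 {Ω : Type*} (c2 : Ω → Ω → ℝ) (m M : ℝ) (hm : 0 < m) (hmM : m ≤ M)
    (hlow : ∀ x y, m ≤ c2 x y) (hup : ∀ x y, c2 x y ≤ M)
    (hsym : ∀ x y, c2 x y = c2 y x)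
    (N K : ℕ) (hN : 1 ≤ N) (hK : 1 ≤ K) (x : Fin N → Ω) (y : Fin K → Ω)
    (hexch : ∀ (I : Finset (Fin N)) (J : Finset (Fin K)),
      ∑ i ∈ I, ∑ j ∈ Iᶜ, c2 (x i) (x j) + ∑ k ∈ J, ∑ l ∈ Jᶜ, c2 (y k) (y l)
        ≤ ∑ i ∈ I, ∑ k ∈ J, c2 (x i) (y k) + ∑ i ∈ Iᶜ, ∑ k ∈ Jᶜ, c2 (x i) (y k)) :
    (N : ℝ) ≤ M / m * K + 1 := by
  have i0 : Fin N := ⟨0, hN⟩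
  have h := hexch {i0} univ
  simp only [Finset.sum_singleton, compl_univ, Finset.sum_empty, add_zero,
    Finset.sum_const_zero] at h
  have hL : m * (N - 1) ≤ ∑ j ∈ ({i0} : Finset (Fin N))ᶜ, c2 (x i0) (x j) := by
    have := Finset.card_nsmul_le_sum ({i0} : Finset (Fin N))ᶜ
      (fun j => c2 (x i0) (x j)) m (fun j _ => hlow _ _)
    have hcard : (({i0} : Finset (Fin N))ᶜ).card = N - 1 := by
      simp [Finset.card_compl]
    rw [hcard, nsmul_eq_mul] at this
    have : ((N - 1 : ℕ) : ℝ) * m ≤ _ := this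
    calc m * (N - 1) = ((N - 1 : ℕ) : ℝ) * m := by
          rw [Nat.cast_sub hN]; push_cast; ring
      _ ≤ _ := this
  have hR : ∑ k, c2 (x i0) (y k) ≤ M * K := by
    calc ∑ k, c2 (x i0) (y k) ≤ ∑ _k : Fin K, M := Finset.sum_le_sum fun k _ => hup _ _
      _ = M * K := by simp [mul_comm]
  have key : m * (N - 1) ≤ M * K := hL.trans (h.trans hR)
  have : (N : ℝ) - 1 ≤ M / m * K := by
    rw [div_mul_eq_mul_div, le_div_iff₀ hm]
    nlinarith
  linarith
end

section
/- Let $\mathbb{P} = (\mathbb{P}_n)_{n \ge 0}$ be a grand-canonical probability: $\mathbb{P}_0 \in [0,1]$, each $\mathbb{P}_n$ a finite symmetric nonnegative measure on $\Omega^n$ with $\mathbb{P}_0 + \sum_{n\ge 1} \mathbb{P}_n(\Omega^n) = 1$, and total density $\rho_{\mathbb{P}} = \sum_{n\ge 1} n \cdot (\text{first marginal of } \mathbb{P}_n)$ equal to a given finite measure $\rho$ on $\Omega$. Suppose $\rho$ is absolutely continuous with finite mass and let $\mathbb{G}_\rho$ be the Poisson state $\mathbb{G}_{\rho,n} = e^{-\rho(\Omega)}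 \rho^{\otimes n}/n!$. Then $\sum_{n \ge 0} \log(n!) \, \mathbb{P}_n(\Omega^n) \le \mathcal{H}(\mathbb{P}, \mathbb{G}_\rho) + \log 2 + \rho(\Omega)\log\rho(\Omega)$, where $\mathcal{H}(\mathbb{P},\mathbb{G}_\rho) = \sum_{n\ge 0} \int_{\Omega^n} \mathbb{P}_n \log(\mathbb{P}_n / \mathbb{G}_{\rho,n})$ is the grand-canonical relative entropy. -/
/-! Data processing for the relative entropy (pushing `Pₙ` and `𝔾_{ρ,n}` forward to a point)
bounds the `n`-th term of `H(P, 𝔾_ρ)` below by `pₙ log (pₙ / gₙ)`, where `pₙ = Pₙ(Ωⁿ)` and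
`gₙ = e^{-ρ(Ω)} ρ(Ω)ⁿ / n!`. Expanding `log gₙ` isolates `pₙ log n!`; the remaining `-pₙ log pₙ`
is controlled by Gibbs' inequality against the geometric weights `qₙ = 2^{-n-1}`, used termwise
as `p log (p / q) ≥ p - q` so that no summability of `pₙ log pₙ` is needed. Summing with
`∑ pₙ = 1` and `∑ n pₙ = ρ(Ω)` leaves the surplus `ρ(Ω) (log 2 - 1) ≤ 0`. -/

open MeasureTheory ENNReal

/-- A grand-canonical probability with density `ρ`. -/
def IsGC {Ω : Type*} [MeasurableSpace Ω] (P : ∀ n : ℕ, Measure (Fin n → Ω))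
    (ρ : Measure Ω) : Prop :=
  (∀ n, IsFiniteMeasure (P n)) ∧
  (∑' n, P n Set.univ) = 1 ∧
  (∀ (n : ℕ) (σ : Equiv.Perm (Fin n)), (P n).map (fun v => v ∘ σ) = P n) ∧
  (∀ B : Set Ω, MeasurableSet B →
    (∑' (n : ℕ), ((n : ℝ≥0∞) + 1) * P (n + 1) {v | v 0 ∈ B}) = ρ B)

open Set InformationTheory
open scoped Nat

lemma mul_log_measureReal_div_le_integral_llr {α : Type*} [MeasurableSpace α]
    {μ ν : Measure α} [IsFiniteMeasure μ] [IsFiniteMeasure ν] (hμν : μ ≪ ν)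
    (h_int : Integrable (llr μ ν) μ) :
    μ.real univ * Real.log (μ.real univ / ν.real univ) ≤ ∫ x, llr μ ν x ∂μ := by
  linarith [mul_log_le_toReal_klDiv hμν h_int, toReal_klDiv hμν h_int]

lemma sub_le_mul_log_div {p q : ℝ} (hp : 0 ≤ p) (hq : 0 < q) :
    p - q ≤ p * Real.log (p / q) := by
  have h := mul_nonneg hq.le (klFun_nonneg (div_nonneg hp hq.le))
  have e : q * klFun (p / q) = p * Real.log (p / q) + q - p := by
    rw [klFun_apply]; field_simp
  linarith

lemma log_exp_neg_mul_pow_div_factorial {m : ℝ} {n : ℕ} (h : m ^ n ≠ 0) :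
    Real.log (Real.exp (-m) * m ^ n / n !) = -m + n * Real.log m - Real.log n ! := by
  rw [Real.log_div (by positivity) (by positivity), Real.log_mul (Real.exp_ne_zero _) h,
    Real.log_exp, Real.log_pow]

lemma log_factorial_mul_le {p m I : ℝ} {n : ℕ} (hp : 0 ≤ p) (hpm : p ≠ 0 → m ^ n ≠ 0)
    (hI : p * Real.log (p / (Real.exp (-m) * m ^ n / n !)) ≤ I) :
    Real.log n ! * p
      ≤ I + p * ((n + 1) * Real.log 2 - 1 - m + n * Real.log m) + (1 / 2) ^ (n + 1) := by
  rcases hp.eq_or_lt with rfl | hp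
  · simp only [zero_mul, mul_zero, add_zero] at hI ⊢
    linarith [pow_pos (one_half_pos (α := ℝ)) (n + 1)]
  · have hgibbs := sub_le_mul_log_div hp.le (q := (1 / 2) ^ (n + 1)) (by positivity)
    have hmn := hpm hp.ne'
    rw [Real.log_div hp.ne' (by positivity), log_exp_neg_mul_pow_div_factorial hmn] at hI
    rw [Real.log_div hp.ne' (pow_ne_zero _ (by norm_num)), Real.log_pow, one_div,
      Real.log_inv] at hgibbs
    push_cast at hgibbs
    linarith

lemma tsum_ofReal_log_factorial_mul_le {p I : ℕ → ℝ} {m : ℝ} (hp : ∀ n, 0 ≤ p n)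
    (hm : 0 ≤ m) (hp_sum : HasSum p 1) (hp_mean : HasSum (fun n => n * p n) m)
    (hI : Summable I)
    (hpm : ∀ n, p n ≠ 0 → m ^ n ≠ 0)
    (hpI : ∀ n, p n * Real.log (p n / (Real.exp (-m) * m ^ n / n !)) ≤ I n) :
    ∑' n, ENNReal.ofReal (Real.log n ! * p n)
      ≤ ENNReal.ofReal (∑' n, I n + Real.log 2 + m * Real.log m) := by
  have hbound : HasSum
      (fun n : ℕ =>
        I n + p n * ((n + 1) * Real.log 2 - 1 - m + n * Real.log m) + (1 / 2) ^ (n + 1))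
      (∑' n, I n + ((Real.log 2 - 1 - m) * 1 + (Real.log 2 + Real.log m) * m) + 1 / 2 * 2) := by
    refine (hI.hasSum.add ((hp_sum.mul_left _).add (hp_mean.mul_left _))).add
      (hasSum_geometric_two.mul_left _) |>.congr_fun fun n => ?_
    ring
  have hle n := log_factorial_mul_le (hp n) (hpm n) (hpI n)
  have hnonneg n : 0 ≤ Real.log n ! * p n :=
    mul_nonneg (Real.log_natCast_nonneg _) (hp n)
  have hsum := hbound.summable.of_nonneg_of_le hnonneg hle
  rw [← ENNReal.ofReal_tsum_of_nonneg hnonneg hsum]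
  refine ENNReal.ofReal_le_ofReal ((hsum.tsum_le_tsum hle hbound.summable).trans ?_)
  rw [hbound.tsum_eq]
  nlinarith [Real.log_two_lt_d9]

namespace IsGC

variable {Ω : Type*} [MeasurableSpace Ω] {P : ∀ n : ℕ, Measure (Fin n → Ω)}
  {ρ : Measure Ω}

lemma hasSum_measureReal_univ (hP : IsGC P ρ) : HasSum (fun n => (P n).real univ) 1 := by
  have hP_fin : ∀ n, IsFiniteMeasure (P n) := hP.1
  have h := ENNReal.hasSum_toReal (hP.2.1 ▸ one_ne_top)
  rwa [← ENNReal.tsum_toReal_eq fun n => measure_ne_top _ _, hP.2.1, toReal_one] at h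

lemma hasSum_mul_measureReal_univ [IsFiniteMeasure ρ] (hP : IsGC P ρ) :
    HasSum (fun n : ℕ => n * (P n).real univ) (ρ.real univ) := by
  have hP_fin : ∀ n, IsFiniteMeasure (P n) := hP.1
  have hρ := hP.2.2.2 univ MeasurableSet.univ
  simp only [mem_univ, ofPred_true] at hρ
  have h := ENNReal.hasSum_toReal (hρ ▸ measure_ne_top ρ univ)
  rw [← ENNReal.tsum_toReal_eq fun n => by finiteness, hρ] at h
  refine (hasSum_nat_add_iff' 1).mp ?_
  simpa [measureReal_def, ENNReal.toReal_add] using h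

end IsGC

theorem stmt6_general (d : ℕ) (ρ : Measure (EuclideanSpace ℝ (Fin d))) [IsFiniteMeasure ρ]
    (P : ∀ n : ℕ, Measure (Fin n → EuclideanSpace ℝ (Fin d))) (hP : IsGC P ρ)
    (G : ∀ n : ℕ, Measure (Fin n → EuclideanSpace ℝ (Fin d)))
    (hG : ∀ n : ℕ, G n = ENNReal.ofReal (Real.exp (-(ρ Set.univ).toReal) / n.factorial)
      • Measure.pi (fun _ : Fin n => ρ))
    (hPG : ∀ n, P n ≪ G n) (H : ℝ)
    (hint : ∀ n, Integrable
      (fun v => Real.log (((P n).rnDeriv (G n) v).toReal)) (P n))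
    (hsumH : Summable fun n : ℕ =>
      ∫ v, Real.log (((P n).rnDeriv (G n) v).toReal) ∂(P n))
    (hH : H = ∑' n : ℕ, ∫ v, Real.log (((P n).rnDeriv (G n) v).toReal) ∂(P n)) :
    (∑' n : ℕ, ENNReal.ofReal (Real.log (n.factorial : ℝ)) * P n Set.univ)
      ≤ ENNReal.ofReal (H + Real.log 2
          + (ρ Set.univ).toReal * Real.log (ρ Set.univ).toReal) := by
  have hP_fin : ∀ n, IsFiniteMeasure (P n) := hP.1
  have hG_fin n : IsFiniteMeasure (G n) := hG n ▸ Measure.smul_finite _ ENNReal.ofReal_ne_top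
  have hG_univ n : (G n).real univ = Real.exp (-ρ.real univ) * ρ.real univ ^ n / n ! := by
    simp only [hG n, measureReal_def, Measure.smul_apply, Measure.pi_univ, smul_eq_mul,
      Finset.prod_const, Finset.card_univ, Fintype.card_fin, ENNReal.toReal_mul,
      ENNReal.toReal_pow]
    rw [ENNReal.toReal_ofReal (by positivity)]
    ring
  have hP_supp n (hp : (P n).real univ ≠ 0) : ρ.real univ ^ n ≠ 0 := by
    have hg : (G n).real univ ≠ 0 :=
      (measureReal_ne_zero_iff).mpr fun h => (measureReal_ne_zero_iff).mp hp (hPG n h)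
    rw [hG_univ] at hg
    exact right_ne_zero_of_mul (div_ne_zero_iff.mp hg).1
  calc ∑' n : ℕ, ENNReal.ofReal (Real.log n !) * P n univ
      = ∑' n : ℕ, ENNReal.ofReal (Real.log n ! * (P n).real univ) := by
        congr with n
        rw [ENNReal.ofReal_mul (Real.log_natCast_nonneg _), ofReal_measureReal]
    _ ≤ _ := hH ▸ tsum_ofReal_log_factorial_mul_le (fun _ => measureReal_nonneg)
        measureReal_nonneg hP.hasSum_measureReal_univ hP.hasSum_mul_measureReal_univ hsumH
        hP_supp fun n => hG_univ n ▸ mul_log_measureReal_div_le_integral_llr (hPG n) (hint n)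

/-- Growth estimate in the particle number: for a grand-canonical probability `P` with
absolutely continuous density `ρ` and finite relative entropy `H` with respect to the
Poisson state `𝔾_ρ`, one has
`∑ log(n!) Pₙ(Ωⁿ) ≤ H(P,𝔾_ρ) + log 2 + ρ(Ω) log ρ(Ω)`. -/
theorem stmt6 (d : ℕ) (ρ : Measure (EuclideanSpace ℝ (Fin d))) [IsFiniteMeasure ρ]
    (hac : ρ ≪ (volume : Measure (EuclideanSpace ℝ (Fin d))))
    (P : ∀ n : ℕ, Measure (Fin n → EuclideanSpace ℝ (Fin d))) (hP : IsGC P ρ)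
    (G : ∀ n : ℕ, Measure (Fin n → EuclideanSpace ℝ (Fin d)))
    (hG : ∀ n : ℕ, G n = ENNReal.ofReal (Real.exp (-(ρ Set.univ).toReal) / n.factorial)
      • Measure.pi (fun _ : Fin n => ρ))
    (hPG : ∀ n, P n ≪ G n) (H : ℝ)
    (hint : ∀ n, Integrable
      (fun v => Real.log (((P n).rnDeriv (G n) v).toReal)) (P n))
    (hsumH : Summable fun n : ℕ =>
      ∫ v, Real.log (((P n).rnDeriv (G n) v).toReal) ∂(P n))
    (hH : H = ∑' n : ℕ, ∫ v, Real.log (((P n).rnDeriv (G n) v).toReal) ∂(P n)) :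
    (∑' n : ℕ, ENNReal.ofReal (Real.log (n.factorial : ℝ)) * P n Set.univ)
      ≤ ENNReal.ofReal (H + Real.log 2
          + (ρ Set.univ).toReal * Real.log (ρ Set.univ).toReal) :=
  stmt6_general d ρ P hP G hG hPG H hint hsumH hH
end

section
/- Let $c_2$ be a positive constant $c > 0$ on $\Omega \times \Omega$ and $c_n(x_1,\dots,x_n) = \binom{n}{2} c$. For every grand-canonical probability $\mathbb{P}$ with density $\rho$, the total cost equals $\frac{c}{2}\sum_{n\ge0} n^2 \mathbb{P}_n(\Omega^n) - \frac{c}{2}\rho(\Omega)$, and hence, writing $\rho(\Omega) = N + t$ with $N = \lfloor\rho(\Omega)\rfloor$ and $t \in [0,1)$, the infimum over all grand-canonical probabilities with density $\rho$ is $\frac{c}{2}\big(\rho(\Omega)(\rho(\Omega)-1) - t(t-1)\big)$, attained exactly by probabilities supported on particle numbers $\{N, N+1\}$ with $\mathbb{P}_N(\Omega^N) = 1-t$ and $\mathbb{P}_{N+1}(\Omega^{N+1}) = t$. -/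
open MeasureTheory ENNReal

-- pointwise nat inequality
lemma ptwise (N n : ℕ) : 2*N*n ≤ n*(n-1) + N*(N+1) := by
  rcases n with _ | m
  · simp
  · have h : ((m:ℤ) - N) * ((m:ℤ) - N + 1) ≥ 0 := by
      rcases le_or_gt (m:ℤ) N with h | h
      · rcases eq_or_lt_of_le h with h | h
        · simp [h]
        · nlinarith
      · nlinarith
    zify
    push_cast
    nlinarith

lemma ptwise_strict (N n : ℕ) (h1 : n ≠ N) (h2 : n ≠ N + 1) :
    2*N*n < n*(n-1) + N*(N+1) := by
  rcases n with _ | m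
  · have : N ≠ 0 := fun h => h1 (h ▸ rfl)
    have : 0 < N := Nat.pos_of_ne_zero this
    simpa using Nat.mul_pos this (Nat.succ_pos N)
  · have hk : 0 < ((m:ℤ) + 1 - N) * ((m:ℤ) - N) := by
      rcases lt_or_gt_of_ne (fun h : m + 1 = N => h1 (by omega)) with h | h
      · have : (m:ℤ) + 1 < N := by exact_mod_cast h
        apply mul_pos_of_neg_of_neg <;> linarith
      · have hm : N + 1 < m + 1 := by omega
        have : (N:ℤ) < m := by exact_mod_cast Nat.lt_of_succ_lt_succ hm
        apply _root_.mul_pos <;> linarith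
    zify
    push_cast
    nlinarith

lemma choose2_mul (n : ℕ) : n.choose 2 * 2 = n * (n-1) := by
  rw [Nat.choose_two_right]
  have : 2 ∣ n * (n-1) := by
    rcases n with _ | m
    · simp
    · simpa [Nat.mul_comm] using Nat.even_mul_succ_self m |>.two_dvd
  omega

lemma master (lam : ℕ → ℝ≥0∞) (c M : ℝ) (hc : 0 < c)
    (N : ℕ) (t : ℝ) (hMt : M = N + t) (ht0 : 0 ≤ t) (ht1 : t < 1)
    (h1 : ∑' n, lam n = 1)
    (h2 : ∑' n : ℕ, (n : ℝ≥0∞) * lam n = ENNReal.ofReal M) :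
    ((∑' n : ℕ, (n.choose 2 : ℝ≥0∞) * ENNReal.ofReal c * lam n)
          + ENNReal.ofReal (c / 2) * ENNReal.ofReal M
        = ENNReal.ofReal (c / 2) * ∑' n : ℕ, (n : ℝ≥0∞) ^ 2 * lam n) ∧
    (ENNReal.ofReal (c / 2 * (M * (M - 1) - t * (t - 1)))
        ≤ ∑' n : ℕ, (n.choose 2 : ℝ≥0∞) * ENNReal.ofReal c * lam n) ∧
    ((∑' n : ℕ, (n.choose 2 : ℝ≥0∞) * ENNReal.ofReal c * lam n)
          = ENNReal.ofReal (c / 2 * (M * (M - 1) - t * (t - 1))) ↔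
        (lam N = ENNReal.ofReal (1 - t) ∧ lam (N + 1) = ENNReal.ofReal t ∧
          ∀ n : ℕ, n ≠ N → n ≠ N + 1 → lam n = 0)) := by
  have hc2 : (0:ℝ) < c / 2 := by linarith
  set Q : ℝ := M * (M - 1) - t * (t - 1) with hQdef
  have hQ : Q = 2 * N * M - N * (N + 1) := by subst hMt; ring
  have hQ0 : 0 ≤ Q := by
    rw [hQ, hMt]
    rcases Nat.eq_zero_or_pos N with h | h
    · simp [h]
    · have : (1:ℝ) ≤ N := by exact_mod_cast h
      nlinarith
  -- termwise rewriting of the cost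
  have hterm : ∀ n : ℕ, (n.choose 2 : ℝ≥0∞) * ENNReal.ofReal c
      = ENNReal.ofReal (c/2) * ((n*(n-1) : ℕ) : ℝ≥0∞) := by
    intro n
    have e1 : ((n*(n-1) : ℕ) : ℝ≥0∞) = (n.choose 2 : ℝ≥0∞) * 2 := by
      rw [← choose2_mul]; push_cast; ring
    have e2 : ENNReal.ofReal (c/2) * 2 = ENNReal.ofReal c := by
      rw [show (2:ℝ≥0∞) = ENNReal.ofReal 2 by simp,
        ← ENNReal.ofReal_mul (le_of_lt hc2)]
      norm_num
    rw [e1, ← mul_assoc, mul_comm (ENNReal.ofReal (c/2)), mul_assoc, e2]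
  have costeq : (∑' n : ℕ, (n.choose 2 : ℝ≥0∞) * ENNReal.ofReal c * lam n)
      = ENNReal.ofReal (c/2) * ∑' n : ℕ, ((n*(n-1) : ℕ) : ℝ≥0∞) * lam n := by
    rw [← ENNReal.tsum_mul_left]
    congr 1; funext n; rw [hterm n, mul_assoc]
  set T : ℝ≥0∞ := ∑' n : ℕ, ((n*(n-1) : ℕ) : ℝ≥0∞) * lam n with hTdef
  -- the linear lower bound sum
  have hg : ∑' n : ℕ, ((2*N*n : ℕ) : ℝ≥0∞) * lam n = ENNReal.ofReal (2*N*M) := by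
    rw [show (2*(N:ℝ)*M) = ((2*N : ℕ) : ℝ)*M by push_cast; ring,
      ENNReal.ofReal_mul (by positivity), ENNReal.ofReal_natCast, ← h2,
      ← ENNReal.tsum_mul_left]
    congr 1; funext n; push_cast; ring
  have hsplit : ∑' n : ℕ, ((n*(n-1) + N*(N+1) : ℕ) : ℝ≥0∞) * lam n
      = T + ((N*(N+1) : ℕ) : ℝ≥0∞) := by
    have : ∀ n : ℕ, ((n*(n-1) + N*(N+1) : ℕ) : ℝ≥0∞) * lam n
        = ((n*(n-1) : ℕ) : ℝ≥0∞) * lam n + ((N*(N+1) : ℕ) : ℝ≥0∞) * lam n := by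
      intro n; push_cast; ring
    rw [tsum_congr this, ENNReal.tsum_add, ENNReal.tsum_mul_left, h1, mul_one]
  have key : ENNReal.ofReal (2*N*M) ≤ T + ((N*(N+1) : ℕ) : ℝ≥0∞) := by
    rw [← hg, ← hsplit]
    refine ENNReal.tsum_le_tsum fun n => ?_
    exact mul_le_mul_left (by exact_mod_cast ptwise N n) _
  have hQT : ENNReal.ofReal Q ≤ T := by
    have : ENNReal.ofReal Q = ENNReal.ofReal (2*N*M) - ((N*(N+1) : ℕ) : ℝ≥0∞) := by
      rw [← ENNReal.ofReal_natCast, ← ENNReal.ofReal_sub _ (by positivity)]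
      congr 1; rw [hQ]; push_cast; ring
    rw [this, tsub_le_iff_right]
    exact key
  refine ⟨?_, ?_, ?_⟩
  · -- part 1
    have hsq : ∀ n : ℕ, ((n : ℝ≥0∞)) ^ 2 * lam n
        = ((n*(n-1) : ℕ) : ℝ≥0∞) * lam n + (n : ℝ≥0∞) * lam n := by
      intro n
      rw [← add_mul]
      congr 1
      have h : n*(n-1) + n = n^2 := by
        rcases n with _ | m
        · simp
        · simp only [Nat.add_sub_cancel]; ring
      exact_mod_cast h.symm
    rw [costeq, tsum_congr hsq, ENNReal.tsum_add, h2, mul_add]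
  · -- part 2
    rw [costeq, ENNReal.ofReal_mul (le_of_lt hc2)]
    exact mul_le_mul_right hQT _
  · -- part 3
    have hne : N ≠ N + 1 := by omega
    constructor
    · intro h
      -- forward direction
      have hT : T = ENNReal.ofReal Q := by
        rw [costeq, ENNReal.ofReal_mul (le_of_lt hc2)] at h
        exact (ENNReal.mul_right_inj (ENNReal.ofReal_pos.2 hc2).ne'
          ENNReal.ofReal_ne_top).1 h
      have hDsum : ∑' n : ℕ, ((n*(n-1) + N*(N+1) : ℕ) : ℝ≥0∞) * lam n
          = (∑' n : ℕ, ((n*(n-1) + N*(N+1) - 2*N*n : ℕ) : ℝ≥0∞) * lam n)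
            + ENNReal.ofReal (2*N*M) := by
        rw [← hg, ← ENNReal.tsum_add]
        refine tsum_congr fun n => ?_
        rw [← add_mul]
        congr 1
        exact_mod_cast (Nat.sub_add_cancel (ptwise N n)).symm
      have htot : ∑' n : ℕ, ((n*(n-1) + N*(N+1) : ℕ) : ℝ≥0∞) * lam n
          = ENNReal.ofReal (2*N*M) := by
        rw [hsplit, hT, ← ENNReal.ofReal_natCast,
          ← ENNReal.ofReal_add hQ0 (by positivity)]
        congr 1
        rw [hQ]; push_cast; ring
      have hD0 : ∑' n : ℕ, ((n*(n-1) + N*(N+1) - 2*N*n : ℕ) : ℝ≥0∞) * lam n = 0 := by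
        have heq := hDsum.symm.trans htot
        rw [add_comm] at heq
        exact (ENNReal.add_right_inj ENNReal.ofReal_ne_top).1
          (heq.trans (add_zero _).symm)
      have hzero : ∀ n : ℕ, n ≠ N → n ≠ N + 1 → lam n = 0 := by
        intro n hn1 hn2
        have := ENNReal.tsum_eq_zero.1 hD0 n
        rcases mul_eq_zero.1 this with h' | h'
        · exfalso
          have hpos : 0 < n*(n-1) + N*(N+1) - 2*N*n :=
            Nat.sub_pos_of_lt (ptwise_strict N n hn1 hn2)
          rw [Nat.cast_eq_zero] at h'
          omega
        · exact h'
      -- sums over the pair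
      have hsum1 : lam N + lam (N+1) = 1 := by
        rw [← h1, tsum_eq_sum (s := {N, N+1}) (fun b hb => hzero b
          (by simp at hb; exact fun h => hb.1 h |>.elim)
          (by simp at hb; exact hb.2))]
        rw [Finset.sum_pair hne]
      have hsum2 : (N : ℝ≥0∞) * lam N + ((N:ℝ≥0∞)+1) * lam (N+1) = ENNReal.ofReal M := by
        rw [← h2, tsum_eq_sum (s := {N, N+1}) (fun b hb => by
          rw [hzero b (by simp at hb; exact hb.1) (by simp at hb; exact hb.2), mul_zero])]
        rw [Finset.sum_pair hne]
        push_cast; ring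
      have hlam1 : lam (N+1) = ENNReal.ofReal t := by
        have e1 : (N : ℝ≥0∞) * lam N + ((N:ℝ≥0∞)+1) * lam (N+1)
            = (N : ℝ≥0∞) + lam (N+1) := by
          rw [show (N : ℝ≥0∞) * lam N + ((N:ℝ≥0∞)+1) * lam (N+1)
            = (N : ℝ≥0∞) * (lam N + lam (N+1)) + lam (N+1) by ring, hsum1, mul_one]
        have e2 : ENNReal.ofReal M = (N : ℝ≥0∞) + ENNReal.ofReal t := by
          rw [hMt, ENNReal.ofReal_add (by positivity) ht0, ENNReal.ofReal_natCast]
        rw [e1, e2] at hsum2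
        exact (ENNReal.add_right_inj (ENNReal.natCast_ne_top N)).1 hsum2
      have hlam0 : lam N = ENNReal.ofReal (1 - t) := by
        rw [hlam1] at hsum1
        have := ENNReal.eq_sub_of_add_eq ENNReal.ofReal_ne_top hsum1
        rw [this, ← ENNReal.ofReal_one, ← ENNReal.ofReal_sub _ ht0]
      exact ⟨hlam0, hlam1, hzero⟩
    · rintro ⟨hl0, hl1, hz⟩
      have hcost : ∑' n : ℕ, (n.choose 2 : ℝ≥0∞) * ENNReal.ofReal c * lam n
          = (N.choose 2 : ℝ≥0∞) * ENNReal.ofReal c * lam N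
            + ((N+1).choose 2 : ℝ≥0∞) * ENNReal.ofReal c * lam (N+1) := by
        rw [tsum_eq_sum (s := {N, N+1}) (fun b hb => by
          rw [hz b (by simp at hb; exact hb.1) (by simp at hb; exact hb.2), mul_zero])]
        rw [Finset.sum_pair hne]
      rw [hcost, hl0, hl1]
      have e1 : (N.choose 2 : ℝ≥0∞) * ENNReal.ofReal c * ENNReal.ofReal (1-t)
          = ENNReal.ofReal ((N.choose 2 : ℝ) * c * (1-t)) := by
        rw [ENNReal.ofReal_mul (by positivity), ENNReal.ofReal_mul (by positivity),
          ENNReal.ofReal_natCast]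
      have e2 : ((N+1).choose 2 : ℝ≥0∞) * ENNReal.ofReal c * ENNReal.ofReal t
          = ENNReal.ofReal (((N+1).choose 2 : ℝ) * c * t) := by
        rw [ENNReal.ofReal_mul (by positivity), ENNReal.ofReal_mul (by positivity),
          ENNReal.ofReal_natCast]
      rw [e1, e2, ← ENNReal.ofReal_add (mul_nonneg (mul_nonneg (Nat.cast_nonneg _) hc.le) (by linarith))
        (by positivity)]
      congr 1
      rw [Nat.cast_choose_two, Nat.cast_choose_two, hQdef, hMt]
      push_cast; ring

/-- Constant pairwise cost `cₙ = C(n,2)·c`: the total cost of any grand-canonical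
probability with density `ρ` equals `(c/2)∑ n² Pₙ(Ωⁿ) - (c/2)ρ(Ω)`, its infimum is
`(c/2)(ρ(Ω)(ρ(Ω)-1) - t(t-1))` with `t` the fractional part of `ρ(Ω)`, attained exactly
on probabilities supported on `{N, N+1}` with masses `1-t` and `t`. -/
theorem stmt10 {Ω : Type*} [MeasurableSpace Ω] (ρ : Measure Ω) [IsFiniteMeasure ρ]
    (c : ℝ) (hc : 0 < c)
    (M : ℝ) (hM : M = (ρ Set.univ).toReal) (N : ℕ) (hN : N = ⌊M⌋₊) (t : ℝ)
    (ht : t = M - N) :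
    (∀ P : ∀ n : ℕ, Measure (Fin n → Ω), IsGC P ρ →
      (∑' n : ℕ, (n.choose 2 : ℝ≥0∞) * ENNReal.ofReal c * P n Set.univ)
          + ENNReal.ofReal (c / 2) * ρ Set.univ
        = ENNReal.ofReal (c / 2) * ∑' n : ℕ, (n : ℝ≥0∞) ^ 2 * P n Set.univ) ∧
    (∀ P : ∀ n : ℕ, Measure (Fin n → Ω), IsGC P ρ →
      ENNReal.ofReal (c / 2 * (M * (M - 1) - t * (t - 1)))
        ≤ ∑' n : ℕ, (n.choose 2 : ℝ≥0∞) * ENNReal.ofReal c * P n Set.univ) ∧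
    (∀ P : ∀ n : ℕ, Measure (Fin n → Ω), IsGC P ρ →
      ((∑' n : ℕ, (n.choose 2 : ℝ≥0∞) * ENNReal.ofReal c * P n Set.univ)
          = ENNReal.ofReal (c / 2 * (M * (M - 1) - t * (t - 1))) ↔
        (P N Set.univ = ENNReal.ofReal (1 - t) ∧
          P (N + 1) Set.univ = ENNReal.ofReal t ∧
          ∀ n : ℕ, n ≠ N → n ≠ N + 1 → P n Set.univ = 0))) := by
  have hM0 : 0 ≤ M := hM ▸ ENNReal.toReal_nonneg
  have hρ : ρ Set.univ = ENNReal.ofReal M := by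
    rw [hM, ENNReal.ofReal_toReal (measure_ne_top ρ _)]
  have ht0 : 0 ≤ t := by
    rw [ht, hN]; have := Nat.floor_le hM0; linarith
  have ht1 : t < 1 := by
    rw [ht, hN]; have := Nat.lt_floor_add_one M; linarith
  have hMt : M = N + t := by rw [ht]; ring
  have key : ∀ P : ∀ n : ℕ, Measure (Fin n → Ω), IsGC P ρ →
      ((∑' n : ℕ, (n.choose 2 : ℝ≥0∞) * ENNReal.ofReal c * P n Set.univ)
          + ENNReal.ofReal (c / 2) * ENNReal.ofReal M
        = ENNReal.ofReal (c / 2) * ∑' n : ℕ, (n : ℝ≥0∞) ^ 2 * P n Set.univ) ∧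
      (ENNReal.ofReal (c / 2 * (M * (M - 1) - t * (t - 1)))
        ≤ ∑' n : ℕ, (n.choose 2 : ℝ≥0∞) * ENNReal.ofReal c * P n Set.univ) ∧
      ((∑' n : ℕ, (n.choose 2 : ℝ≥0∞) * ENNReal.ofReal c * P n Set.univ)
          = ENNReal.ofReal (c / 2 * (M * (M - 1) - t * (t - 1))) ↔
        (P N Set.univ = ENNReal.ofReal (1 - t) ∧
          P (N + 1) Set.univ = ENNReal.ofReal t ∧
          ∀ n : ℕ, n ≠ N → n ≠ N + 1 → P n Set.univ = 0)) := by
    intro P hP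
    have h1 : ∑' n : ℕ, P n Set.univ = 1 := hP.2.1
    have hd := hP.2.2.2 Set.univ MeasurableSet.univ
    simp only [Set.mem_univ, Set.setOf_true] at hd
    have h2 : ∑' n : ℕ, (n : ℝ≥0∞) * P n Set.univ = ENNReal.ofReal M := by
      rw [tsum_eq_zero_add' ENNReal.summable]
      simp only [Nat.cast_zero, zero_mul, zero_add]
      rw [← hρ, ← hd]
      exact tsum_congr fun n => by push_cast; ring
    exact master (fun n => P n Set.univ) c M hc N t hMt ht0 ht1 h1 h2
  exact ⟨fun P hP => hρ ▸ (key P hP).1, fun P hP => (key P hP).2.1,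
    fun P hP => (key P hP).2.2⟩
end

section
/- Let $(\Omega, \rho)$ be a finite measure space with $\rho(\Omega) < \infty$. Let $(f_n)$ be positive functions with $f_n = e^{\psi_n}$ converging weakly in $L^2(\Omega, d\rho)$ to $f = e^{\psi} \ge 0$ (with $f > 0$ $\rho$-a.e.), and assume $(\psi_n)$ is bounded in $L^1(\Omega, d\rho)$ and $\limsup_n \int \psi_n\,d\rho > -\infty$. Then $\psi \in L^1(\Omega, d\rho)$ and $\limsup_{n\to\infty} \int_\Omega \psi_n\,d\rho \le \int_\Omega \psi\,d\rho$. -/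
/-!
Truncate `ψ` from below: `hₖ = max ψ (-k)` is integrable (as `ψ⁺ ≤ f`), `e^{-hₖ} ≤ e^k` is a
legitimate test function, and `f e^{-hₖ} = e^{ψ - hₖ} ≤ 1`. Integrating `t + 1 ≤ e^t` at
`t = ψₙ - hₖ` gives `∫ ψₙ ≤ ∫ hₖ + ∫ e^{ψₙ} e^{-hₖ} - ρ(Ω)`, and weak convergence turns this into
`limsup ∫ ψₙ ≤ ∫ hₖ + ∫ f e^{-hₖ} - ρ(Ω) ≤ ∫ hₖ`. (This replaces the Jensen step of
Chayes–Chayes–Lieb, and truncating only from below removes their error term.) As `∫ ψₙ ≥ -C`,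
the integrals `∫ hₖ` are bounded below, so `ψ ∈ L¹` by Fatou, and `hₖ ↓ ψ` gives the bound.
-/

open MeasureTheory Filter

lemma tendsto_max_neg_natCast (a : ℝ) :
    Tendsto (fun k : ℕ => max a (-k)) atTop (nhds a) := by
  refine tendsto_const_nhds.congr' ?_
  filter_upwards [(tendsto_neg_atTop_atBot.comp tendsto_natCast_atTop_atTop).eventually_le_atBot a]
    with k hk
  exact (max_eq_left hk).symm

section

variable {α : Type*} [MeasurableSpace α] {μ : Measure α} {ψ f : α → ℝ}

lemma aestronglyMeasurable_of_ae_eq_exp (hf : ∀ᵐ x ∂μ, f x = Real.exp (ψ x))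
    (hfm : AEStronglyMeasurable f μ) : AEStronglyMeasurable ψ μ :=
  hfm.aemeasurable.log.aestronglyMeasurable.congr <| by
    filter_upwards [hf] with x hx using by rw [hx, Real.log_exp]

lemma integrable_max_zero_of_ae_eq_exp (hf : ∀ᵐ x ∂μ, f x = Real.exp (ψ x))
    (hfi : Integrable f μ) (hψ : AEStronglyMeasurable ψ μ) :
    Integrable (fun x => max (ψ x) 0) μ :=
  hfi.mono' (hψ.sup aestronglyMeasurable_const) <| by
    filter_upwards [hf] with x hx
    rw [Real.norm_of_nonneg (le_max_right _ _), hx]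
    exact max_le (by linarith [Real.add_one_le_exp (ψ x)]) (Real.exp_pos _).le

variable [IsFiniteMeasure μ]

lemma integral_mul_exp_neg_max_le (hf : ∀ᵐ x ∂μ, f x = Real.exp (ψ x))
    (c : ℝ) : ∫ x, f x * Real.exp (-max (ψ x) c) ∂μ ≤ μ.real Set.univ := by
  calc ∫ x, f x * Real.exp (-max (ψ x) c) ∂μ ≤ ∫ _, (1 : ℝ) ∂μ := by
        refine integral_mono_of_nonneg ?_ (integrable_const 1) ?_ <;>
          filter_upwards [hf] with x hx <;> rw [hx, ← Real.exp_add]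
        · positivity
        · exact Real.exp_le_one_iff.2 (by linarith [le_max_left (ψ x) c])
    _ = μ.real Set.univ := by simp

lemma memLp_exp_neg_max_neg_natCast (hψ : AEStronglyMeasurable ψ μ) (p : ENNReal) (k : ℕ) :
    MemLp (fun x => Real.exp (-max (ψ x) (-k))) p μ :=
  MemLp.of_bound (Real.continuous_exp.comp_aestronglyMeasurable
    (hψ.sup aestronglyMeasurable_const).neg) (Real.exp k) (ae_of_all _ fun x => by
      rw [Real.norm_of_nonneg (Real.exp_pos _).le, Real.exp_le_exp]
      linarith [le_max_right (ψ x) (-k)])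

lemma integrable_max_neg_natCast (hψ : AEStronglyMeasurable ψ μ)
    (hpos : Integrable (fun x => max (ψ x) 0) μ) (k : ℕ) :
    Integrable (fun x => max (ψ x) (-k)) μ :=
  integrable_of_le_of_le (hψ.sup aestronglyMeasurable_const)
    (ae_of_all _ fun x => le_max_right (ψ x) (-k))
    (ae_of_all _ fun x => max_le_max_left _ (by simp)) (integrable_const _) hpos

lemma integrable_of_forall_le_integral_max_neg_natCast (hψ : AEStronglyMeasurable ψ μ)
    (hpos : Integrable (fun x => max (ψ x) 0) μ) {B : ℝ}
    (hB : ∀ k : ℕ, B ≤ ∫ x, max (ψ x) (-k) ∂μ) :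
    Integrable ψ μ := by
  have habs : ∀ (k : ℕ) x, |max (ψ x) (-k)| = 2 * max (ψ x) 0 - max (ψ x) (-k) := by
    intro k x
    have : (0 : ℝ) ≤ k := k.cast_nonneg
    rcases le_total 0 (ψ x) with h | h
    · rw [max_eq_left h, max_eq_left (by linarith), abs_of_nonneg h]; ring
    rcases le_total (-k : ℝ) (ψ x) with h' | h'
    · rw [max_eq_right h, max_eq_left h', abs_of_nonpos h]; ring
    · rw [max_eq_right h, max_eq_right h', abs_of_nonpos (by linarith)]; ring
  have hnorm : ∀ k : ℕ, eLpNorm (fun x => max (ψ x) (-k)) 1 μ ≤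
      ENNReal.ofReal (2 * ∫ x, max (ψ x) 0 ∂μ - B) := by
    intro k
    have hk := integrable_max_neg_natCast hψ hpos k
    rw [eLpNorm_one_eq_lintegral_enorm, ← ofReal_integral_norm_eq_lintegral_enorm hk]
    refine ENNReal.ofReal_le_ofReal ?_
    simp only [Real.norm_eq_abs, habs k]
    rw [integral_sub (hpos.const_mul 2) hk, integral_const_mul]
    linarith [hB k]
  refine memLp_one_iff_integrable.1 ⟨hψ, ?_⟩
  exact (Lp.eLpNorm_le_of_ae_tendsto (Eventually.of_forall hnorm)
    (fun k => (integrable_max_neg_natCast hψ hpos k).1)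
    (ae_of_all _ fun x => tendsto_max_neg_natCast (ψ x))).trans_lt ENNReal.ofReal_lt_top

lemma limsup_integral_le_of_tendsto_integral_exp_mul {u : ℕ → α → ℝ} {h : α → ℝ} {L : ℝ}
    (hu : ∀ n, Integrable (u n) μ) (hh : Integrable h μ)
    (hexp : ∀ n, Integrable (fun x => Real.exp (u n x) * Real.exp (-h x)) μ)
    (hlim : Tendsto (fun n => ∫ x, Real.exp (u n x) * Real.exp (-h x) ∂μ) atTop (nhds L))
    (hL : L ≤ μ.real Set.univ)
    (hbdd : IsBoundedUnder (· ≥ ·) atTop fun n => ∫ x, u n x ∂μ) :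
    limsup (fun n => ∫ x, u n x ∂μ) atTop ≤ ∫ x, h x ∂μ := by
  have hle : ∀ n, ∫ x, u n x ∂μ ≤
      ∫ x, h x ∂μ + (∫ x, Real.exp (u n x) * Real.exp (-h x) ∂μ - μ.real Set.univ) := by
    intro n
    have hpt : ∀ x, u n x + 1 ≤ h x + Real.exp (u n x) * Real.exp (-h x) := fun x => by
      rw [← Real.exp_add]
      linarith [Real.add_one_le_exp (u n x + -h x)]
    have : ∫ x, (u n x + 1) ∂μ ≤ ∫ x, (h x + Real.exp (u n x) * Real.exp (-h x)) ∂μ :=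
      integral_mono ((hu n).add (integrable_const 1)) (hh.add (hexp n)) hpt
    rw [integral_add (hu n) (integrable_const 1), integral_add hh (hexp n)] at this
    simp only [integral_const, smul_eq_mul, mul_one] at this
    linarith
  have hrhs := tendsto_const_nhds (x := ∫ x, h x ∂μ) |>.add (hlim.sub_const (μ.real Set.univ))
  calc limsup (fun n => ∫ x, u n x ∂μ) atTop
      ≤ ∫ x, h x ∂μ + (L - μ.real Set.univ) :=
        (limsup_le_limsup (Eventually.of_forall hle) hbdd.isCoboundedUnder_le
          hrhs.isBoundedUnder_le).trans_eq hrhs.limsup_eq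
    _ ≤ ∫ x, h x ∂μ := by linarith

end

/-- Chayes–Chayes–Lieb lemma: if `fₙ = e^{ψₙ}` converges weakly in `L²(dρ)` to
`f = e^{ψ}` (with `f > 0` a.e.) on a finite measure space, and `(ψₙ)` is bounded in
`L¹(dρ)`, then `ψ ∈ L¹(dρ)` and `limsup ∫ ψₙ dρ ≤ ∫ ψ dρ`. -/
theorem stmt14 {Ω : Type*} [MeasurableSpace Ω] (ρ : Measure Ω) [IsFiniteMeasure ρ]
    (ψ : Ω → ℝ) (ψseq : ℕ → Ω → ℝ) (f : Ω → ℝ)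
    (hf : ∀ᵐ x ∂ρ, f x = Real.exp (ψ x))
    (hfL2 : MemLp f 2 ρ)
    (hfnL2 : ∀ n, MemLp (fun x => Real.exp (ψseq n x)) 2 ρ)
    (hweak : ∀ g : Ω → ℝ, MemLp g 2 ρ →
      Tendsto (fun n => ∫ x, Real.exp (ψseq n x) * g x ∂ρ) atTop
        (nhds (∫ x, f x * g x ∂ρ)))
    (hψn : ∀ n, Integrable (ψseq n) ρ)
    (hbdd : ∃ C : ℝ, ∀ n, (∫ x, |ψseq n x| ∂ρ) ≤ C)
    :
    Integrable ψ ρ ∧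
      limsup (fun n => ∫ x, ψseq n x ∂ρ) atTop ≤ ∫ x, ψ x ∂ρ := by
  obtain ⟨C, hC⟩ := hbdd
  have hψm := aestronglyMeasurable_of_ae_eq_exp hf hfL2.1
  have hpos := integrable_max_zero_of_ae_eq_exp hf (hfL2.integrable one_le_two) hψm
  have hlower : ∀ n, -C ≤ ∫ x, ψseq n x ∂ρ := fun n =>
    (neg_le_neg (abs_integral_le_integral_abs.trans (hC n))).trans (neg_abs_le _)
  have hupper : ∀ n, ∫ x, ψseq n x ∂ρ ≤ C := fun n =>
    (le_abs_self _).trans (abs_integral_le_integral_abs.trans (hC n))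
  have hkey (k : ℕ) : limsup (fun n => ∫ x, ψseq n x ∂ρ) atTop ≤ ∫ x, max (ψ x) (-k) ∂ρ := by
    have hg := memLp_exp_neg_max_neg_natCast hψm 2 k
    exact limsup_integral_le_of_tendsto_integral_exp_mul hψn
      (integrable_max_neg_natCast hψm hpos k) (fun n => (hfnL2 n).integrable_mul hg)
      (hweak _ hg) (integral_mul_exp_neg_max_le hf _) (isBoundedUnder_of ⟨-C, hlower⟩)
  have hlimsup : -C ≤ limsup (fun n => ∫ x, ψseq n x ∂ρ) atTop :=
    le_limsup_of_frequently_le (Frequently.of_forall hlower) (isBoundedUnder_of ⟨C, hupper⟩)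
  have hψ : Integrable ψ ρ :=
    integrable_of_forall_le_integral_max_neg_natCast hψm hpos fun k => hlimsup.trans (hkey k)
  have htrunc : Tendsto (fun k : ℕ => ∫ x, max (ψ x) (-k) ∂ρ) atTop (nhds (∫ x, ψ x ∂ρ)) :=
    integral_tendsto_of_tendsto_of_antitone (integrable_max_neg_natCast hψm hpos) hψ
      (ae_of_all _ fun x k l hkl => max_le_max_left _ (by simpa using hkl))
      (ae_of_all _ fun x => tendsto_max_neg_natCast (ψ x))
  exact ⟨hψ, ge_of_tendsto' htrunc hkey⟩
end

section
/- Let $h : \mathbb{R}^d \to \mathbb{R}$ be differentiable and convex, let $\rho$ be a finite measure on $\mathbb{R}^d$ with finite first moment and $X = \int x\,d\rho(x)$, and define the cost $c_0 = h(X) - X\cdot\nabla h(X)$, $c_n(x_1,\dots,x_n) = h(\sum_{j=1}^n x_j)$ for $n \ge 1$. Then for every grand-canonical probability $\mathbb{P} = (\mathbb{P}_n)$ with density $\rho$, the total cost satisfies $\mathbb{P}(\mathbf{c}) := c_0\mathbb{P}_0 + \sum_{n\ge1}\int c_n\,d\mathbb{P}_n \ge h(X)$, with equality if and only if $\sum_{j=1}^n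 x_j = X$ holds $\mathbb{P}_n$-almost everywhere for all $n \ge 1$, provided $h$ is strictly convex. -/
/-!
Let `D(y) = h y - h X - ∇h(X)·(y - X)` be the Bregman divergence of `h` at `X`; it is
nonnegative by convexity and, for strictly convex `h`, vanishes only at `y = X`.
By the permutation symmetry of `Pₙ` every coordinate has the one-body marginal, so the density
constraint gives `∑ₙ ∫ ∑ⱼ xⱼ dPₙ = X`, while the normalization gives
`P₀ = 1 - ∑ₙ Pₙ(Ωⁿ)`. Substituting both into the total cost yields
`P(c) = h X + ∑ₙ ∫ D(∑ⱼ xⱼ) dPₙ`, a sum of nonnegative terms.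
-/

open MeasureTheory ENNReal Set

section Bregman

variable {E : Type*} [NormedAddCommGroup E] [NormedSpace ℝ E] {f : E → ℝ} {x : E}

theorem ConvexOn.add_fderiv_le (hf : ConvexOn ℝ univ f) (hfx : DifferentiableAt ℝ f x) (y : E) :
    f x + fderiv ℝ f x (y - x) ≤ f y := by
  let ℓ : ℝ →ᵃ[ℝ] E := AffineMap.lineMap x y
  have hfℓ : ConvexOn ℝ univ (f ∘ ℓ) := by simpa using hf.comp_affineMap ℓ
  have hderiv : HasDerivAt (f ∘ ℓ) (fderiv ℝ f x (y - x)) 0 := by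
    have hfx' : HasFDerivAt f (fderiv ℝ f x) (ℓ 0) := by simpa [ℓ] using hfx.hasFDerivAt
    exact hfx'.comp_hasDerivAt 0 AffineMap.hasDerivAt_lineMap
  have hslope := hfℓ.le_slope_of_hasDerivAt (mem_univ 0) (mem_univ 1) one_pos hderiv
  simp only [slope_def_field, Function.comp_apply, AffineMap.lineMap_apply_one,
    AffineMap.lineMap_apply_zero, sub_zero, div_one, ℓ] at hslope
  linarith

theorem StrictConvexOn.add_fderiv_lt (hf : StrictConvexOn ℝ univ f) (hfx : DifferentiableAt ℝ f x)
    {y : E} (hxy : x ≠ y) : f x + fderiv ℝ f x (y - x) < f y := by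
  have hmid : f (midpoint ℝ x y) < 2⁻¹ * f x + 2⁻¹ * f y := by
    simpa [midpoint_eq_smul_add, smul_add] using
      hf.2 (mem_univ x) (mem_univ y) hxy (by norm_num : (0 : ℝ) < 1 / 2)
        (by norm_num : (0 : ℝ) < 1 / 2) (by norm_num)
  have htangent := hf.convexOn.add_fderiv_le hfx (midpoint ℝ x y)
  rw [midpoint_sub_left, map_smul, smul_eq_mul, invOf_eq_inv] at htangent
  linarith

noncomputable def bregman (f : E → ℝ) (x y : E) : ℝ := f y - f x - fderiv ℝ f x (y - x)

theorem ConvexOn.bregman_nonneg (hf : ConvexOn ℝ univ f) (hfx : DifferentiableAt ℝ f x) (y : E) :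
    0 ≤ bregman f x y := by
  rw [bregman]
  linarith [hf.add_fderiv_le hfx y]

theorem StrictConvexOn.bregman_eq_zero_iff (hf : StrictConvexOn ℝ univ f)
    (hfx : DifferentiableAt ℝ f x) {y : E} : bregman f x y = 0 ↔ y = x := by
  refine ⟨fun hy => by_contra fun hyx => ?_, fun hyx => by simp [hyx, bregman]⟩
  rw [bregman] at hy
  linarith [hf.add_fderiv_lt hfx (Ne.symm hyx)]

variable {α : Type*} [MeasurableSpace α] {μ : Measure α} {g : α → E}

theorem StrictConvexOn.integral_bregman_eq_zero_iff (hf : StrictConvexOn ℝ univ f)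
    (hfx : DifferentiableAt ℝ f x) (hint : Integrable (fun a => bregman f x (g a)) μ) :
    ∫ a, bregman f x (g a) ∂μ = 0 ↔ ∀ᵐ a ∂μ, g a = x := by
  rw [integral_eq_zero_iff_of_nonneg (fun a => hf.convexOn.bregman_nonneg hfx (g a)) hint]
  exact Filter.eventually_congr (.of_forall fun a => hf.bregman_eq_zero_iff hfx)

theorem MeasureTheory.Integrable.bregman [IsFiniteMeasure μ] (hfg : Integrable (fun a => f (g a)) μ)
    (hg : Integrable g μ) : Integrable (fun a => bregman f x (g a)) μ :=
  (hfg.sub (integrable_const _)).sub ((fderiv ℝ f x).integrable_comp (hg.sub (integrable_const x)))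

theorem integral_bregman [CompleteSpace E] [IsFiniteMeasure μ]
    (hfg : Integrable (fun a => f (g a)) μ) (hg : Integrable g μ) :
    ∫ a, bregman f x (g a) ∂μ =
      ∫ a, f (g a) ∂μ - μ.real univ * f x - fderiv ℝ f x (∫ a, g a ∂μ - μ.real univ • x) := by
  have hgx : Integrable (fun a => g a - x) μ := hg.sub (integrable_const x)
  have hfgx : Integrable (fun a => f (g a) - f x) μ := hfg.sub (integrable_const _)
  unfold bregman
  rw [integral_sub hfgx ((fderiv ℝ f x).integrable_comp hgx),
    integral_sub hfg (integrable_const _), (fderiv ℝ f x).integral_comp_comm hgx,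
    integral_sub hg (integrable_const x), integral_const, integral_const, smul_eq_mul]

end Bregman

theorem map_eval_eq_of_perm_invariant {Ω : Type*} [MeasurableSpace Ω] {n : ℕ}
    {μ : Measure (Fin n → Ω)} (hμ : ∀ σ : Equiv.Perm (Fin n), μ.map (fun v => v ∘ σ) = μ)
    (i j : Fin n) : μ.map (fun v => v i) = μ.map (fun v => v j) := by
  have hswap : Measurable fun v : Fin n → Ω => v ∘ Equiv.swap i j :=
    measurable_pi_lambda _ fun k => measurable_pi_apply _
  conv_lhs => rw [← hμ (Equiv.swap i j), Measure.map_map (measurable_pi_apply i) hswap]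
  simp [Function.comp_def]

namespace IsGC

section Marginals

variable {Ω : Type*} [MeasurableSpace Ω] {P : ∀ n : ℕ, Measure (Fin n → Ω)} {ρ : Measure Ω}

theorem eq_sum_smul_map_eval_zero (hP : IsGC P ρ) :
    ρ = Measure.sum fun n : ℕ => ((n : ℝ≥0∞) + 1) • (P (n + 1)).map (fun v => v 0) := by
  ext B hB
  rw [Measure.sum_apply _ hB, ← hP.2.2.2 B hB]
  congr with n
  rw [Measure.smul_apply, Measure.map_apply (measurable_pi_apply 0) hB, smul_eq_mul]
  rfl

theorem hasSum_toReal_measure_univ_succ (hP : IsGC P ρ) :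
    HasSum (fun n => (P (n + 1) univ).toReal) (1 - (P 0 univ).toReal) := by
  have hmass := ENNReal.hasSum_toReal (f := fun n => P n univ) (hP.2.1 ▸ one_ne_top)
  rw [← ENNReal.tsum_toReal_eq fun n => (hP.1 n).measure_univ_lt_top.ne, hP.2.1,
    toReal_one] at hmass
  simpa using (hasSum_nat_add_iff' 1).mpr hmass

end Marginals

variable {E : Type*} [NormedAddCommGroup E] [MeasurableSpace E] [BorelSpace E]
  [SecondCountableTopology E] {P : ∀ n : ℕ, Measure (Fin n → E)} {ρ : Measure E}

theorem integrable_eval (hP : IsGC P ρ) (hmom : Integrable (fun x => x) ρ) (n : ℕ)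
    (j : Fin (n + 1)) : Integrable (fun v => v j) (P (n + 1)) := by
  have hmarg : Integrable (fun x => x) ((P (n + 1)).map (fun v => v j)) := by
    rw [map_eval_eq_of_perm_invariant (hP.2.2.1 _) j 0,
      ← integrable_smul_measure (c := (n : ℝ≥0∞) + 1) (by simp) (by simp)]
    rw [hP.eq_sum_smul_map_eval_zero] at hmom
    exact hmom.mono_measure (Measure.le_sum _ n)
  exact (integrable_map_measure aestronglyMeasurable_id
    (measurable_pi_apply j).aemeasurable).mp hmarg

theorem integrable_sum_eval (hP : IsGC P ρ) (hmom : Integrable (fun x => x) ρ) (n : ℕ) :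
    Integrable (fun v : Fin (n + 1) → E => ∑ j, v j) (P (n + 1)) :=
  integrable_finsetSum _ fun j _ => hP.integrable_eval hmom n j

variable [NormedSpace ℝ E]

theorem hasSum_integral_sum_eval (hP : IsGC P ρ) (hmom : Integrable (fun x => x) ρ) :
    HasSum (fun n => ∫ v, ∑ j, v j ∂P (n + 1)) (∫ x, x ∂ρ) := by
  have hmom' := hmom
  rw [hP.eq_sum_smul_map_eval_zero] at hmom' ⊢
  convert hasSum_integral_measure hmom' using 1
  funext n
  have hcoord (j : Fin (n + 1)) :
      ∫ v, v j ∂P (n + 1) = ∫ x, x ∂(P (n + 1)).map (fun v => v 0) := by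
    rw [← map_eval_eq_of_perm_invariant (hP.2.2.1 _) j 0]
    exact (integral_map (measurable_pi_apply (X := fun _ => E) j).aemeasurable
      aestronglyMeasurable_id).symm
  rw [integral_finsetSum _ fun j _ => hP.integrable_eval hmom n j, integral_smul_measure,
    Finset.sum_congr rfl fun j _ => hcoord j, Finset.sum_const, Finset.card_univ,
    Fintype.card_fin, ← Nat.cast_smul_eq_nsmul ℝ]
  norm_cast

theorem hasSum_integral_bregman [CompleteSpace E] (hP : IsGC P ρ)
    (hmom : Integrable (fun x => x) ρ) {X : E} (hX : X = ∫ x, x ∂ρ) {h : E → ℝ}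
    (hint : ∀ n, Integrable (fun v : Fin (n + 1) → E => h (∑ j, v j)) (P (n + 1)))
    (hsum : Summable fun n => ∫ v, h (∑ j, v j) ∂P (n + 1)) :
    HasSum (fun n => ∫ v, bregman h X (∑ j, v j) ∂P (n + 1))
      ((h X - fderiv ℝ h X X) * (P 0 univ).toReal + ∑' n, ∫ v, h (∑ j, v j) ∂P (n + 1) - h X) := by
  set L := fderiv ℝ h X
  set p₀ := (P 0 univ).toReal
  set T := ∑' n, ∫ v, h (∑ j, v j) ∂P (n + 1)
  have hterm (n : ℕ) : ∫ v, bregman h X (∑ j, v j) ∂P (n + 1) =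
      ∫ v, h (∑ j, v j) ∂P (n + 1) - (P (n + 1) univ).toReal * h X
        - (L (∫ v, ∑ j, v j ∂P (n + 1)) - (P (n + 1) univ).toReal * L X) := by
    have := hP.1 (n + 1)
    rw [integral_bregman (hint n) (hP.integrable_sum_eval hmom n), map_sub, map_smul,
      smul_eq_mul, measureReal_def]
  have hmass := hP.hasSum_toReal_measure_univ_succ
  have hcombined := (hsum.hasSum.sub (hmass.mul_right (h X))).sub
    (((hP.hasSum_integral_sum_eval hmom).mapL L).sub (hmass.mul_right (L X)))
  rw [← hX] at hcombined
  simp_rw [hterm]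
  have hvalue : (h X - L X) * p₀ + T - h X = T - (1 - p₀) * h X - (L X - (1 - p₀) * L X) := by
    ring
  rwa [hvalue]

end IsGC

theorem stmt16_general (d : ℕ) (h : EuclideanSpace ℝ (Fin d) → ℝ)
    (hconv : ConvexOn ℝ Set.univ h) (hdiff : Differentiable ℝ h)
    (ρ : Measure (EuclideanSpace ℝ (Fin d)))
    (hmom : Integrable (fun x : EuclideanSpace ℝ (Fin d) => x) ρ)
    (P : ∀ n : ℕ, Measure (Fin n → EuclideanSpace ℝ (Fin d))) (hP : IsGC P ρ)
    (X : EuclideanSpace ℝ (Fin d)) (hX : X = ∫ x, x ∂ρ)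
    (hint : ∀ n : ℕ,
      Integrable (fun v : Fin (n + 1) → EuclideanSpace ℝ (Fin d) => h (∑ j, v j))
        (P (n + 1)))
    (hsum : Summable fun n : ℕ =>
      ∫ v : Fin (n + 1) → EuclideanSpace ℝ (Fin d), h (∑ j, v j) ∂(P (n + 1))) :
    (h X ≤ (h X - (inner ℝ X (gradient h X) : ℝ)) * (P 0 Set.univ).toReal
        + ∑' n : ℕ,
            ∫ v : Fin (n + 1) → EuclideanSpace ℝ (Fin d), h (∑ j, v j) ∂(P (n + 1))) ∧
    (StrictConvexOn ℝ Set.univ h →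
      ((h X - (inner ℝ X (gradient h X) : ℝ)) * (P 0 Set.univ).toReal
          + (∑' n : ℕ,
              ∫ v : Fin (n + 1) → EuclideanSpace ℝ (Fin d), h (∑ j, v j) ∂(P (n + 1)))
          = h X ↔
        ∀ n : ℕ, P (n + 1) {v : Fin (n + 1) → EuclideanSpace ℝ (Fin d)
          | (∑ j, v j) ≠ X} = 0)) := by
  have hcost : inner ℝ X (gradient h X) = fderiv ℝ h X X := by simp [inner_gradient_right]
  rw [hcost]
  set J := fun n => ∫ v, bregman h X (∑ j, v j) ∂P (n + 1)
  have hJ : HasSum J _ := hP.hasSum_integral_bregman hmom hX hint hsum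
  have hJ_nonneg (n : ℕ) : 0 ≤ J n := integral_nonneg fun v => hconv.bregman_nonneg (hdiff X) _
  refine ⟨by linarith [hJ.nonneg hJ_nonneg], fun hstrict => ?_⟩
  calc _ ↔ HasSum J 0 := by rw [← sub_eq_zero]; exact ⟨(· ▸ hJ), hJ.unique⟩
    _ ↔ ∀ n, J n = 0 := (hasSum_zero_iff_of_nonneg hJ_nonneg).trans funext_iff
    _ ↔ _ := forall_congr' fun n => by
      have := hP.1 (n + 1)
      exact (hstrict.integral_bregman_eq_zero_iff (hdiff X)
        ((hint n).bregman (hP.integrable_sum_eval hmom n))).trans ae_iff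

/-- Convex functions of the center of mass: for the cost `c₀ = h(X) - X·∇h(X)`,
`cₙ = h(∑ xⱼ)`, every grand-canonical probability with density `ρ` has total cost at
least `h(X)` with `X = ∫ x dρ`; if `h` is strictly convex, equality holds iff the
center of mass is fixed, i.e. `∑ xⱼ = X` holds `Pₙ`-a.e. for all `n ≥ 1`. -/
theorem stmt16 (d : ℕ) (h : EuclideanSpace ℝ (Fin d) → ℝ)
    (hconv : ConvexOn ℝ Set.univ h) (hdiff : Differentiable ℝ h)
    (ρ : Measure (EuclideanSpace ℝ (Fin d))) [IsFiniteMeasure ρ]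
    (hmom : Integrable (fun x : EuclideanSpace ℝ (Fin d) => x) ρ)
    (P : ∀ n : ℕ, Measure (Fin n → EuclideanSpace ℝ (Fin d))) (hP : IsGC P ρ)
    (X : EuclideanSpace ℝ (Fin d)) (hX : X = ∫ x, x ∂ρ)
    (hint : ∀ n : ℕ,
      Integrable (fun v : Fin (n + 1) → EuclideanSpace ℝ (Fin d) => h (∑ j, v j))
        (P (n + 1)))
    (hsum : Summable fun n : ℕ =>
      ∫ v : Fin (n + 1) → EuclideanSpace ℝ (Fin d), h (∑ j, v j) ∂(P (n + 1))) :
    (h X ≤ (h X - (inner ℝ X (gradient h X) : ℝ)) * (P 0 Set.univ).toReal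
        + ∑' n : ℕ,
            ∫ v : Fin (n + 1) → EuclideanSpace ℝ (Fin d), h (∑ j, v j) ∂(P (n + 1))) ∧
    (StrictConvexOn ℝ Set.univ h →
      ((h X - (inner ℝ X (gradient h X) : ℝ)) * (P 0 Set.univ).toReal
          + (∑' n : ℕ,
              ∫ v : Fin (n + 1) → EuclideanSpace ℝ (Fin d), h (∑ j, v j) ∂(P (n + 1)))
          = h X ↔
        ∀ n : ℕ, P (n + 1) {v : Fin (n + 1) → EuclideanSpace ℝ (Fin d)
          | (∑ j, v j) ≠ X} = 0)) :=
  stmt16_general d h hconv hdiff ρ hmom P hP X hX hint hsum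
end
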